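/- arXiv:1203.2171 — 5 statements merged into one kernel-verified Lean document; each statement's English description precedes it below -/
import Mathlib

section
/- For all integers l, n, λ ≥ 0 with λ ≥ l^(n+1)·n!, and for every sequence S_1, S_2, …, S_λ of subsets of {1, …, n}, there exist integers 1 ≤ i_0 < i_1 < ⋯ < i_l ≤ λ+1 such that S_{i_0} ∪ S_{i_0+1} ∪ ⋯ ∪ S_{i_1−1} = S_{i_1} ∪ ⋯ ∪ S_{i_2−1} = ⋯ = S_{i_{l−1}} ∪ ⋯ ∪ S_{i_l−1}. -/
open Finset

/-- Key lemma: induction on the cardinality bound of an ambient set `A`. -/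
lemma block_unions_key (l : ℕ) (hl : 0 < l) : ∀ m : ℕ, ∀ {n : ℕ} (A : Finset (Fin n)),
    A.card ≤ m → ∀ a lam : ℕ, l ^ (m + 1) * m.factorial ≤ lam →
    ∀ S : ℕ → Finset (Fin n), (∀ i, a ≤ i → i < a + lam → S i ⊆ A) →
    ∃ i : Fin (l + 1) → ℕ, StrictMono i ∧ a ≤ i 0 ∧ i (Fin.last l) ≤ a + lam ∧
      ∀ j k : Fin l,
        (Finset.Ico (i j.castSucc) (i j.succ)).biUnion S =
        (Finset.Ico (i k.castSucc) (i k.succ)).biUnion S := by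
  intro m
  induction m with
  | zero =>
    intro n A hA a lam hlam S hS
    have hlam' : l ≤ lam := by simpa using hlam
    have hAe : A = ∅ := Finset.card_eq_zero.mp (Nat.le_zero.mp hA)
    refine ⟨fun j => a + j.val, ?_, le_add_of_nonneg_right (Nat.zero_le _), ?_, ?_⟩
    · intro j k h
      exact Nat.add_lt_add_left h a
    · simp only [Fin.val_last]
      omega
    · intro j k
      have hempty : ∀ j : Fin l,
          (Finset.Ico (a + (j.castSucc : Fin (l+1)).val) (a + (j.succ : Fin (l+1)).val)).biUnion S = ∅ := by
        intro j
        apply Finset.eq_empty_of_forall_notMem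
        intro x hx
        rw [Finset.mem_biUnion] at hx
        obtain ⟨i, hi, hxi⟩ := hx
        rw [Finset.mem_Ico] at hi
        have hj1 : (j.castSucc : Fin (l+1)).val = j.val := rfl
        have hj2 : (j.succ : Fin (l+1)).val = j.val + 1 := rfl
        have hle : a ≤ i := by omega
        have hlt : i < a + lam := by
          have : j.val < l := j.isLt
          omega
        have := hS i hle hlt hxi
        rw [hAe] at this
        exact absurd this (Finset.notMem_empty x)
      rw [hempty j, hempty k]
  | succ m ih =>
    intro n A hA a lam hlam S hS
    set L := l ^ (m + 1) * (m + 1).factorial with hL_def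
    have hLpos : 0 < L := by positivity
    have hlL : l * L ≤ lam := by
      calc l * L = l ^ (m + 1 + 1) * (m + 1).factorial := by ring
        _ ≤ lam := hlam
    by_cases hall : ∀ j k : Fin l,
        (Finset.Ico (a + j.val * L) (a + j.val * L + L)).biUnion S =
        (Finset.Ico (a + k.val * L) (a + k.val * L + L)).biUnion S
    · refine ⟨fun j => a + j.val * L, ?_, le_add_of_nonneg_right (Nat.zero_le _), ?_, ?_⟩
      · intro j k h
        show a + j.val * L < a + k.val * L
        have hv : j.val < k.val := h
        have := Nat.mul_lt_mul_of_lt_of_le hv (le_refl L) hLpos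
        omega
      · show a + (Fin.last l).val * L ≤ a + lam
        simp only [Fin.val_last]
        omega
      · intro j k
        show (Finset.Ico (a + (j.castSucc).val * L) (a + (j.succ).val * L)).biUnion S =
          (Finset.Ico (a + (k.castSucc).val * L) (a + (k.succ).val * L)).biUnion S
        simp only [Fin.coe_castSucc, Fin.val_succ, add_mul, one_mul, ← add_assoc]
        exact hall j k
    · push_neg at hall
      obtain ⟨j₁, k₁, hne⟩ := hall
      -- one of the two block unions is a proper subset of A
      have hsubA : ∀ j : Fin l,
          (Finset.Ico (a + j.val * L) (a + j.val * L + L)).biUnion S ⊆ A := by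
        intro j
        intro x hx
        rw [Finset.mem_biUnion] at hx
        obtain ⟨i, hi, hxi⟩ := hx
        rw [Finset.mem_Ico] at hi
        have hjl : j.val < l := j.isLt
        have h1 : a ≤ i := by omega
        have h2 : i < a + lam := by nlinarith
        exact hS i h1 h2 hxi
      have hex : ∃ (j₀ : Fin l) (x : Fin n), x ∈ A ∧
          x ∉ (Finset.Ico (a + j₀.val * L) (a + j₀.val * L + L)).biUnion S := by
        by_contra hc
        push_neg at hc
        have hfull : ∀ j : Fin l,
            (Finset.Ico (a + j.val * L) (a + j.val * L + L)).biUnion S = A := by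
          intro j
          apply Finset.Subset.antisymm (hsubA j)
          intro x hx
          by_contra hxn
          exact hxn (hc j x hx)
        exact hne ((hfull j₁).trans (hfull k₁).symm)
      obtain ⟨j₀, x, hxA, hxU⟩ := hex
      have hcard : (A.erase x).card ≤ m := by
        rw [Finset.card_erase_of_mem hxA]
        omega
      have hLbound : l ^ (m + 1) * m.factorial ≤ L := by
        apply Nat.mul_le_mul_left
        exact Nat.factorial_le (Nat.le_succ m)
      have hS' : ∀ i, a + j₀.val * L ≤ i → i < a + j₀.val * L + L → S i ⊆ A.erase x := by
        intro i h1 h2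
        rw [Finset.subset_erase]
        constructor
        · apply hS
          · omega
          · have hjl : j₀.val < l := j₀.isLt
            nlinarith
        · intro hxi
          apply hxU
          rw [Finset.mem_biUnion]
          exact ⟨i, Finset.mem_Ico.mpr ⟨h1, h2⟩, hxi⟩
      obtain ⟨i, hmono, hi0, hilast, hblocks⟩ :=
        ih (A.erase x) hcard (a + j₀.val * L) L hLbound S hS'
      refine ⟨i, hmono, by omega, ?_, hblocks⟩
      have hjl : j₀.val < l := j₀.isLt
      have : a + j₀.val * L + L ≤ a + lam := by nlinarith
      omega

/-- For all integers l, n, λ ≥ 0 with λ ≥ l^(n+1)·n!, and every sequence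
S_1, …, S_λ of subsets of {1, …, n} (here indexed by ℕ, with subsets of `Fin n`),
there exist indices 1 ≤ i_0 < i_1 < ⋯ < i_l ≤ λ+1 such that all the unions of the
consecutive blocks S_{i_j} ∪ ⋯ ∪ S_{i_{j+1}−1} coincide. -/
theorem block_unions_equal (l n lam : ℕ) (hlam : l ^ (n + 1) * n.factorial ≤ lam)
    (S : ℕ → Finset (Fin n)) :
    ∃ i : Fin (l + 1) → ℕ, StrictMono i ∧ 1 ≤ i 0 ∧ i (Fin.last l) ≤ lam + 1 ∧
      ∀ j k : Fin l,
        (Finset.Ico (i j.castSucc) (i j.succ)).biUnion S =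
        (Finset.Ico (i k.castSucc) (i k.succ)).biUnion S := by
  rcases Nat.eq_zero_or_pos l with hl | hl
  · subst hl
    refine ⟨fun _ => 1, ?_, le_refl 1, Nat.le_add_left 1 lam, ?_⟩
    · intro j k h
      exact absurd (Fin.lt_def.mp h) (by omega)
    · intro j; exact j.elim0
  · obtain ⟨i, hmono, hi0, hilast, hblocks⟩ :=
      block_unions_key l hl n (Finset.univ : Finset (Fin n))
        (by simp) 1 lam hlam S (fun i _ _ => Finset.subset_univ _)
    exact ⟨i, hmono, hi0, by omega, hblocks⟩
end

section
/- For every integer k ≥ 3, a linked k-cylinder of length twelve has a K_6 minor. -/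
/-!
Contract, at every level, each of three consecutive arcs of the `k`-cycle to a single vertex.
This is a minor map onto a linked 3-cylinder of length twelve, and the cut points can be chosen
so that the two ends of the linking edges on the first level, and the two on the last level,
fall into different arcs; then the linking edges stay disjoint. After relabelling the arcs the
first-level ends are the paths 0 and 1, which leaves six linked 3-cylinders, each of which
contains an explicit `K₆` model checked by `decide`. Minors compose.
-/

open SimpleGraph

/-- `H` is a minor of `G`: branch sets. -/
def HasMinor {V : Type*} {W : Type*} (G : SimpleGraph V) (H : SimpleGraph W) : Prop :=
  ∃ B : W → Set V,
    (∀ w, (B w).Nonempty) ∧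
    (∀ w, (G.induce (B w)).Connected) ∧
    (∀ w₁ w₂, w₁ ≠ w₂ → Disjoint (B w₁) (B w₂)) ∧
    (∀ w₁ w₂, H.Adj w₁ w₂ → ∃ v₁ ∈ B w₁, ∃ v₂ ∈ B w₂, G.Adj v₁ v₂)

/-- Planarity, via Wagner's theorem: no `K₅` and no `K₃,₃` minor. -/
def IsPlanar {V : Type*} (G : SimpleGraph V) : Prop :=
  ¬ HasMinor G (⊤ : SimpleGraph (Fin 5)) ∧
  ¬ HasMinor G (completeBipartiteGraph (Fin 3) (Fin 3))

/-- A graph is apex if deleting some vertex leaves a planar graph. -/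
def IsApex {V : Type*} (G : SimpleGraph V) : Prop :=
  ∃ v : V, IsPlanar (G.induce {u | u ≠ v})

/-- `G` is `k`-connected. -/
def IsKConnected {V : Type*} [Fintype V] (k : ℕ) (G : SimpleGraph V) : Prop :=
  k < Fintype.card V ∧ ∀ X : Set V, X.ncard < k → (G.induce Xᶜ).Connected

/-- add an apex vertex over the set `S`. -/
def addApex {V : Type*} (G : SimpleGraph V) (S : Set V) : SimpleGraph (Option V) :=
  SimpleGraph.fromRel fun a b =>
    match a, b with
    | some u, some v => G.Adj u v
    | none, some v => v ∈ S
    | _, _ => False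

/-- The linked k-cylinder of length 12: k disjoint paths of 12 vertices
(v^i_0, …, v^i_11), rungs joining consecutive paths (cyclically) at each level,
and two extra edges q₁ = (a₁,0)(b₁,11), q₂ = (a₂,0)(b₂,11). -/
def linkedCylinder12 (k : ℕ) (a₁ b₁ a₂ b₂ : Fin k) : SimpleGraph (Fin k × Fin 12) :=
  SimpleGraph.fromRel fun p q =>
    (p.1 = q.1 ∧ (p.2 : ℕ) + 1 = (q.2 : ℕ)) ∨
    (p.2 = q.2 ∧ ((p.1 : ℕ) + 1) % k = (q.1 : ℕ)) ∨
    (p = (a₁, 0) ∧ q = (b₁, 11)) ∨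
    (p = (a₂, 0) ∧ q = (b₂, 11))

section Minor

variable {V W U : Type*} {G : SimpleGraph V} {H : SimpleGraph W}

theorem induce_biUnion_connected {B : W → Set V} (hB : ∀ w, (G.induce (B w)).Connected)
    (hadj : ∀ w w', H.Adj w w' → ∃ v ∈ B w, ∃ v' ∈ B w', G.Adj v v') {S : Set W}
    (hS : (H.induce S).Connected) : (G.induce (⋃ w ∈ S, B w)).Connected := by
  set T := ⋃ w ∈ S, B w
  have hsub : ∀ w ∈ S, B w ⊆ T := fun w hw => Set.subset_biUnion_of_mem hw
  have reach_inside : ∀ w (hw : w ∈ S) x y (hx : x ∈ B w) (hy : y ∈ B w),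
      (G.induce T).Reachable ⟨x, hsub w hw hx⟩ ⟨y, hsub w hw hy⟩ := fun w hw x y hx hy =>
    ((hB w).preconnected ⟨x, hx⟩ ⟨y, hy⟩).map (G.induceHomOfLE (hsub w hw)).toHom
  have reach_along : ∀ w w' : S, (H.induce S).Walk w w' →
      ∀ x (hx : x ∈ B w) y (hy : y ∈ B w'),
        (G.induce T).Reachable ⟨x, hsub _ w.2 hx⟩ ⟨y, hsub _ w'.2 hy⟩ := by
    intro w w' p
    induction p with
    | @nil u => exact fun x hx y hy => reach_inside _ u.2 x y hx hy
    | @cons w w'' w' h _ ih =>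
      intro x hx y hy
      obtain ⟨v, hv, v', hv', hvv'⟩ := hadj _ _ h
      have hstep : (G.induce T).Adj ⟨v, hsub _ w.2 hv⟩ ⟨v', hsub _ w''.2 hv'⟩ := hvv'
      exact (reach_inside _ w.2 x v hx hv).trans (hstep.reachable.trans (ih v' hv' y hy))
  obtain ⟨w₀, hw₀⟩ := hS.nonempty
  obtain ⟨x₀, hx₀⟩ := (hB w₀).nonempty
  rw [connected_iff_exists_forall_reachable]
  refine ⟨⟨x₀, hsub _ hw₀ hx₀⟩, fun ⟨y, hy⟩ => ?_⟩
  obtain ⟨w, hw, hyw⟩ := Set.mem_iUnion₂.1 hy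
  exact reach_along ⟨w₀, hw₀⟩ ⟨w, hw⟩ (hS.preconnected _ _).some x₀ hx₀ y hyw

theorem HasMinor.trans {K : SimpleGraph U} (hGH : HasMinor G H) (hHK : HasMinor H K) :
    HasMinor G K := by
  obtain ⟨B, hBne, hBconn, hBdisj, hBadj⟩ := hGH
  obtain ⟨C, hCne, hCconn, hCdisj, hCadj⟩ := hHK
  refine ⟨fun u => ⋃ w ∈ C u, B w, fun u => ?_,
    fun u => induce_biUnion_connected hBconn hBadj (hCconn u), fun u u' huu' => ?_,
    fun u u' huu' => ?_⟩
  · obtain ⟨w, hw⟩ := hCne u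
    obtain ⟨v, hv⟩ := hBne w
    exact ⟨v, Set.mem_biUnion hw hv⟩
  · simp only [Set.disjoint_iUnion₂_left, Set.disjoint_iUnion₂_right]
    intro w' hw' w hw
    exact hBdisj w w' fun h => Set.disjoint_left.1 (hCdisj u u' huu') hw (h ▸ hw')
  · obtain ⟨w, hw, w', hw', hww'⟩ := hCadj u u' huu'
    obtain ⟨v, hv, v', hv', hvv'⟩ := hBadj w w' hww'
    exact ⟨v, Set.mem_biUnion hw hv, v', Set.mem_biUnion hw' hv', hvv'⟩

theorem hasMinor_of_connected_fibers (f : V → W) (hf : ∀ w, (G.induce (f ⁻¹' {w})).Connected)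
    (hlift : ∀ w w', H.Adj w w' → ∃ v v', f v = w ∧ f v' = w' ∧ G.Adj v v') : HasMinor G H := by
  refine ⟨fun w => f ⁻¹' {w}, fun w => ?_, hf, fun w w' h => ?_, fun w w' h => ?_⟩
  · obtain ⟨⟨v, hv⟩⟩ := (hf w).nonempty
    exact ⟨v, hv⟩
  · exact Set.disjoint_singleton.2 h |>.preimage f
  · obtain ⟨v, v', hv, hv', hvv'⟩ := hlift w w' h
    exact ⟨v, hv, v', hv', hvv'⟩

theorem hasMinor_of_isChain (L : W → List V) (hne : ∀ w, L w ≠ [])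
    (hchain : ∀ w, (L w).IsChain G.Adj) (hdisj : ∀ w w', w ≠ w' → ∀ x ∈ L w, x ∉ L w')
    (hadj : ∀ w w', H.Adj w w' → ∃ x ∈ L w, ∃ y ∈ L w', G.Adj x y) : HasMinor G H := by
  refine ⟨fun w => {x | x ∈ L w}, fun w => List.exists_mem_of_ne_nil _ (hne w), fun w => ?_,
    fun w w' h => Set.disjoint_left.2 (hdisj w w' h), hadj⟩
  have := (Walk.ofSupport (L w) (hne w) (hchain w)).connected_induce_support
  rwa [Walk.support_ofSupport] at this

end Minor

section LinkedCylinder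

variable {k : ℕ} {a₁ b₁ a₂ b₂ : Fin k}

instance : DecidableRel (linkedCylinder12 k a₁ b₁ a₂ b₂).Adj :=
  fun p q => decidable_of_iff' _ (fromRel_adj _ p q)

theorem linkedCylinder12_adj_of_succ_snd (i : Fin k) {j j' : Fin 12} (h : (j : ℕ) + 1 = j') :
    (linkedCylinder12 k a₁ b₁ a₂ b₂).Adj (i, j) (i, j') :=
  ⟨fun e => by simp only [Prod.mk.injEq, Fin.ext_iff] at e; omega, .inl (.inl ⟨rfl, h⟩)⟩

theorem linkedCylinder12_adj_of_succ_fst {i i' : Fin k} (j : Fin 12)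
    (h : ((i : ℕ) + 1) % k = i') (hne : i ≠ i') :
    (linkedCylinder12 k a₁ b₁ a₂ b₂).Adj (i, j) (i', j) :=
  ⟨fun e => hne (Prod.mk.inj e).1, .inl (.inr (.inl ⟨rfl, h⟩))⟩

theorem linkedCylinder12_adj_link₁ : (linkedCylinder12 k a₁ b₁ a₂ b₂).Adj (a₁, 0) (b₁, 11) :=
  ⟨fun e => absurd (Prod.mk.inj e).2 (by decide), .inl (.inr (.inr (.inl ⟨rfl, rfl⟩)))⟩

theorem linkedCylinder12_adj_link₂ : (linkedCylinder12 k a₁ b₁ a₂ b₂).Adj (a₂, 0) (b₂, 11) :=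
  ⟨fun e => absurd (Prod.mk.inj e).2 (by decide), .inl (.inr (.inr (.inr ⟨rfl, rfl⟩)))⟩

theorem linkedCylinder12_reachable_of_row {S : Set (Fin k × Fin 12)} {j : Fin 12}
    {i i' : Fin k} (hii' : i ≤ i') (hS : ∀ t, i ≤ t → t ≤ i' → (t, j) ∈ S)
    (hi : (i, j) ∈ S) (hi' : (i', j) ∈ S) :
    ((linkedCylinder12 k a₁ b₁ a₂ b₂).induce S).Reachable ⟨(i, j), hi⟩ ⟨(i', j), hi'⟩ := by
  obtain ⟨d, hd⟩ := Nat.exists_eq_add_of_le (Fin.le_def.1 hii')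
  induction d generalizing i' with
  | zero =>
    obtain rfl : i' = i := Fin.ext hd
    rfl
  | succ d ih =>
    let t : Fin k := ⟨i + d, by omega⟩
    have hit : i ≤ t := Fin.le_def.2 (by simp [t])
    have hti' : t ≤ i' := Fin.le_def.2 (by simp [t]; omega)
    have htS := hS t hit hti'
    have hstep : ((linkedCylinder12 k a₁ b₁ a₂ b₂).induce S).Adj ⟨(t, j), htS⟩ ⟨(i', j), hi'⟩ :=
      linkedCylinder12_adj_of_succ_fst j
        (by show ((i : ℕ) + d + 1) % k = i'; rw [Nat.mod_eq_of_lt (by omega)]; omega)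
        (by simp [t, Fin.ext_iff]; omega)
    exact (ih hit (fun s his hst => hS s his (hst.trans hti')) htS rfl).trans hstep.reachable

theorem linkedCylinder12_induce_preimage_connected {m : ℕ} {f : Fin k → Fin m}
    (hconvex : ∀ i t i', i ≤ t → t ≤ i' → f i = f i' → f t = f i) {c : Fin m} (hc : ∃ i, f i = c)
    (j : Fin 12) :
    ((linkedCylinder12 k a₁ b₁ a₂ b₂).induce (Prod.map f id ⁻¹' {(c, j)})).Connected := by
  have hmem : ∀ p : Fin k × Fin 12, p ∈ Prod.map f id ⁻¹' {(c, j)} ↔ f p.1 = c ∧ p.2 = j := by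
    simp
  have reach_row : ∀ {i i'}, i ≤ i' → f i = c → f i' = c → ∀ hi hi',
      ((linkedCylinder12 k a₁ b₁ a₂ b₂).induce _).Reachable ⟨(i, j), hi⟩ ⟨(i', j), hi'⟩ :=
    fun hii' hi hi' => linkedCylinder12_reachable_of_row hii' fun t hit hti' =>
      (hmem _).2 ⟨(hconvex _ t _ hit hti' (hi.trans hi'.symm)).trans hi, rfl⟩
  obtain ⟨i₀, hi₀⟩ := hc
  rw [connected_iff_exists_forall_reachable]
  refine ⟨⟨(i₀, j), (hmem _).2 ⟨hi₀, rfl⟩⟩, fun ⟨⟨i, j'⟩, hi⟩ => ?_⟩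
  obtain ⟨hfi, rfl⟩ := (hmem _).1 hi
  rcases le_total i₀ i with h | h
  · exact reach_row h hi₀ hfi _ _
  · exact (reach_row h hfi hi₀ _ _).symm

theorem linkedCylinder12_hasMinor_map {m : ℕ} (f : Fin k → Fin m) (hf : Function.Surjective f)
    (hconvex : ∀ i t i', i ≤ t → t ≤ i' → f i = f i' → f t = f i)
    (hlift : ∀ c c' : Fin m, c ≠ c' → ((c : ℕ) + 1) % m = c' →
      ∃ i i', f i = c ∧ f i' = c' ∧ (((i : ℕ) + 1) % k = i' ∨ ((i' : ℕ) + 1) % k = i)) :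
    HasMinor (linkedCylinder12 k a₁ b₁ a₂ b₂)
      (linkedCylinder12 m (f a₁) (f b₁) (f a₂) (f b₂)) := by
  refine hasMinor_of_connected_fibers (Prod.map f id)
    (fun ⟨c, j⟩ => linkedCylinder12_induce_preimage_connected hconvex (hf c) j) ?_
  have lift_oriented : ∀ w w' : Fin m × Fin 12, w ≠ w' →
      (w.1 = w'.1 ∧ (w.2 : ℕ) + 1 = w'.2) ∨ (w.2 = w'.2 ∧ ((w.1 : ℕ) + 1) % m = w'.1) ∨
        (w = (f a₁, 0) ∧ w' = (f b₁, 11)) ∨ (w = (f a₂, 0) ∧ w' = (f b₂, 11)) →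
      ∃ v v', Prod.map f id v = w ∧ Prod.map f id v' = w' ∧
        (linkedCylinder12 k a₁ b₁ a₂ b₂).Adj v v' := by
    rintro ⟨c, j⟩ ⟨c', j'⟩ hne (⟨rfl, hj⟩ | ⟨rfl, hc⟩ | ⟨h, h'⟩ | ⟨h, h'⟩)
    · obtain ⟨i, rfl⟩ := hf c
      exact ⟨(i, j), (i, j'), rfl, rfl, linkedCylinder12_adj_of_succ_snd i hj⟩
    · have hcc' : c ≠ c' := fun e => hne (by rw [e])
      obtain ⟨i, i', rfl, rfl, h | h⟩ := hlift c c' hcc' hc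
      · exact ⟨(i, j), (i', j), rfl, rfl,
          linkedCylinder12_adj_of_succ_fst j h fun e => hcc' (congrArg f e)⟩
      · exact ⟨(i, j), (i', j), rfl, rfl,
          (linkedCylinder12_adj_of_succ_fst j h fun e => hcc' (congrArg f e.symm)).symm⟩
    · exact ⟨(a₁, 0), (b₁, 11), h.symm, h'.symm, linkedCylinder12_adj_link₁⟩
    · exact ⟨(a₂, 0), (b₂, 11), h.symm, h'.symm, linkedCylinder12_adj_link₂⟩
  rintro w w' ⟨hne, h | h⟩
  · exact lift_oriented w w' hne h
  · obtain ⟨v', v, hv', hv, hadj⟩ := lift_oriented w' w hne.symm h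
    exact ⟨v, v', hv, hv', hadj.symm⟩

end LinkedCylinder

section Arcs

def arcIndex (c d i : ℕ) : Fin 3 :=
  if i < c then 0 else if i < d then 1 else 2

theorem arcIndex_monotone (c d : ℕ) : Monotone (arcIndex c d) := by
  intro i i' h
  simp only [arcIndex]
  split_ifs <;> omega

variable {c d k : ℕ}

theorem arcIndex_eq_zero {i : ℕ} (h : i < c) : arcIndex c d i = 0 := if_pos h

theorem arcIndex_eq_one {i : ℕ} (hc : c ≤ i) (hd : i < d) : arcIndex c d i = 1 := by
  simp [arcIndex, hd, not_lt.2 hc]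

theorem arcIndex_eq_two {i : ℕ} (hc : c ≤ i) (hd : d ≤ i) : arcIndex c d i = 2 := by
  simp [arcIndex, not_lt.2 hc, not_lt.2 hd]

theorem exists_arcIndex_succ (hc : 0 < c) (hcd : c < d) (hdk : d < k) (x : Fin 3) :
    ∃ i i' : Fin k, arcIndex c d i = x ∧ arcIndex c d i' = x + 1 ∧ ((i : ℕ) + 1) % k = i' := by
  fin_cases x
  · refine ⟨⟨c - 1, by omega⟩, ⟨c, by omega⟩, arcIndex_eq_zero (i := c - 1) (by omega),
      arcIndex_eq_one le_rfl hcd, ?_⟩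
    show (c - 1 + 1) % k = c
    rw [Nat.sub_add_cancel hc, Nat.mod_eq_of_lt (by omega)]
  · refine ⟨⟨d - 1, by omega⟩, ⟨d, by omega⟩,
      arcIndex_eq_one (i := d - 1) (by omega) (by omega), arcIndex_eq_two hcd.le le_rfl, ?_⟩
    show (d - 1 + 1) % k = d
    rw [Nat.sub_add_cancel (by omega), Nat.mod_eq_of_lt hdk]
  · refine ⟨⟨k - 1, by omega⟩, ⟨0, by omega⟩,
      arcIndex_eq_two (i := k - 1) (by omega) (by omega), arcIndex_eq_zero hc, ?_⟩
    show (k - 1 + 1) % k = 0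
    rw [Nat.sub_add_cancel (by omega), Nat.mod_self]

theorem exists_arcIndex_adj (hc : 0 < c) (hcd : c < d) (hdk : d < k) {x y : Fin 3}
    (hxy : x ≠ y) : ∃ i i' : Fin k, arcIndex c d i = x ∧ arcIndex c d i' = y ∧
      (((i : ℕ) + 1) % k = i' ∨ ((i' : ℕ) + 1) % k = i) := by
  have : y = x + 1 ∨ x = y + 1 := by revert x y; decide
  rcases this with rfl | rfl
  · obtain ⟨i, i', hi, hi', h⟩ := exists_arcIndex_succ hc hcd hdk x
    exact ⟨i, i', hi, hi', .inl h⟩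
  · obtain ⟨i', i, hi', hi, h⟩ := exists_arcIndex_succ hc hcd hdk y
    exact ⟨i, i', hi, hi', .inr h⟩

theorem exists_arcIndex_separating {a₁ a₂ b₁ b₂ : ℕ} (hk : 3 ≤ k) (ha₁ : a₁ < k) (ha₂ : a₂ < k)
    (hb₁ : b₁ < k) (hb₂ : b₂ < k) (ha : a₁ ≠ a₂) (hb : b₁ ≠ b₂) :
    ∃ c d, 0 < c ∧ c < d ∧ d < k ∧
      arcIndex c d a₁ ≠ arcIndex c d a₂ ∧ arcIndex c d b₁ ≠ arcIndex c d b₂ := by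
  rcases lt_trichotomy (max a₁ a₂) (max b₁ b₂) with h | h | h
  · exact ⟨max a₁ a₂, max b₁ b₂, by omega, h, by omega, by
      simp only [arcIndex]; split_ifs <;> omega⟩
  · rcases eq_or_lt_of_le (show 1 ≤ max a₁ a₂ by omega) with h1 | h1
    · exact ⟨1, 2, by omega, by omega, by omega, by
        simp only [arcIndex]; split_ifs <;> omega⟩
    · exact ⟨1, max a₁ a₂, by omega, h1, by omega, by
        simp only [arcIndex]; split_ifs <;> omega⟩
  · exact ⟨max b₁ b₂, max a₁ a₂, by omega, h, by omega, by
      simp only [arcIndex]; split_ifs <;> omega⟩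

theorem exists_perm_fin_three {x y : Fin 3} (h : x ≠ y) :
    ∃ σ : Equiv.Perm (Fin 3), σ x = 0 ∧ σ y = 1 := by
  revert x y
  decide

end Arcs

/-- Branch sets of a `K₆` minor of `linkedCylinder12 3 0 β₁ 1 β₂`, each listed along a path. -/
def k6Model : Fin 3 → Fin 3 → Fin 6 → List (Fin 3 × Fin 12)
  | 0, 1 =>
    ![[(0,3), (0,4), (0,5), (0,6)],
      [(1,5), (1,4), (1,3), (2,3)],
      [(2,5), (2,6), (2,7)],
      [(1,6), (1,7)],
      [(0,7), (0,8), (0,9), (0,10), (0,11), (0,0), (0,1), (1,1), (1,2)],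
      [(0,2), (2,2), (2,1), (2,0), (1,0), (1,11), (1,10), (1,9), (1,8), (2,8)]]
  | 0, 2 =>
    ![[(0,3), (0,4), (0,5)],
      [(0,0), (0,1), (0,2)],
      [(1,2), (1,3)],
      [(0,11), (0,10), (0,9), (1,9), (1,8), (1,7), (1,6), (1,5), (1,4)],
      [(2,2), (2,3), (2,4)],
      [(0,6), (0,7), (0,8), (2,8), (2,9), (2,10), (2,11), (1,0), (1,1), (2,1)]]
  | 1, 0 =>
    ![[(0,4), (2,4), (2,5), (2,6), (2,7), (2,8), (0,8), (0,9), (0,10), (0,11)],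
      [(2,2), (2,3)],
      [(1,5), (1,6), (1,7), (1,8), (1,9), (1,10), (1,11), (0,0), (0,1), (2,1)],
      [(1,0), (1,1), (1,2)],
      [(0,2), (0,3)],
      [(1,3), (1,4)]]
  | 1, 2 =>
    ![[(1,7), (1,8), (1,9)],
      [(2,8), (2,9)],
      [(0,9), (0,10), (1,10), (1,11)],
      [(0,0), (0,1), (0,2), (0,3), (2,3), (2,4), (2,5), (2,6), (2,7)],
      [(0,7), (0,8)],
      [(0,6), (1,6), (1,5), (1,4), (1,3), (1,2), (2,2), (2,1), (2,0), (1,0), (2,11), (2,10)]]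
  | 2, 0 =>
    ![[(0,4), (0,5)],
      [(0,6), (0,7), (0,8)],
      [(0,9), (0,10), (0,11), (1,0), (1,1), (1,2), (2,2), (2,3), (2,4)],
      [(0,3), (0,2), (0,1), (0,0), (2,11), (2,10), (2,9), (2,8), (2,7), (1,7)],
      [(1,4), (1,5), (1,6)],
      [(2,5), (2,6)]]
  | 2, 1 =>
    ![[(0,9), (0,10)],
      [(1,8), (1,9), (1,10)],
      [(1,3), (1,4), (1,5), (2,5), (2,6), (2,7), (2,8), (2,9)],
      [(0,11), (1,11), (1,0), (1,1), (1,2)],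
      [(0,0), (2,11), (2,10)],
      [(0,1), (0,2), (0,3), (0,4), (0,5), (0,6), (0,7), (0,8)]]
  | _, _ => fun _ => []

theorem linkedCylinder12_three_hasK6Minor {β₁ β₂ : Fin 3} (hβ : β₁ ≠ β₂) :
    HasMinor (linkedCylinder12 3 0 β₁ 1 β₂) (⊤ : SimpleGraph (Fin 6)) := by
  apply hasMinor_of_isChain (k6Model β₁ β₂) <;> revert β₁ β₂ <;> decide

theorem linkedCylinder12_exists_hasMinor_three {k : ℕ} {a₁ b₁ a₂ b₂ : Fin k} (hk : 3 ≤ k)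
    (ha : a₁ ≠ a₂) (hb : b₁ ≠ b₂) : ∃ β₁ β₂ : Fin 3, β₁ ≠ β₂ ∧
      HasMinor (linkedCylinder12 k a₁ b₁ a₂ b₂) (linkedCylinder12 3 0 β₁ 1 β₂) := by
  obtain ⟨c, d, hc, hcd, hdk, hA, hB⟩ := exists_arcIndex_separating hk a₁.isLt a₂.isLt b₁.isLt
    b₂.isLt (Fin.val_ne_of_ne ha) (Fin.val_ne_of_ne hb)
  obtain ⟨σ, hσ₁, hσ₂⟩ := exists_perm_fin_three hA
  let f : Fin k → Fin 3 := fun i => σ (arcIndex c d i)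
  have hminor : HasMinor (linkedCylinder12 k a₁ b₁ a₂ b₂)
      (linkedCylinder12 3 (f a₁) (f b₁) (f a₂) (f b₂)) := by
    refine linkedCylinder12_hasMinor_map f (fun x => ?_) (fun i t i' hit hti' h => ?_)
      (fun x y hxy _ => ?_)
    · obtain ⟨i, -, hi, -⟩ := exists_arcIndex_succ hc hcd hdk (σ.symm x)
      exact ⟨i, by simp [f, hi]⟩
    · have h' : arcIndex c d i = arcIndex c d i' := σ.injective h
      have hit' := arcIndex_monotone c d (Fin.le_def.1 hit)
      have hti'' := arcIndex_monotone c d (Fin.le_def.1 hti')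
      exact congrArg σ (le_antisymm (hti''.trans h'.ge) hit')
    · obtain ⟨i, i', hi, hi', h⟩ := exists_arcIndex_adj hc hcd hdk (σ.symm.injective.ne hxy)
      exact ⟨i, i', by simp [f, hi], by simp [f, hi'], h⟩
  rw [show f a₁ = 0 from hσ₁, show f a₂ = 1 from hσ₂] at hminor
  exact ⟨f b₁, f b₂, fun h => hB (σ.injective h), hminor⟩

/-- for every k ≥ 3, a linked k-cylinder of length twelve
(the two linking edges having no common end) has a K₆ minor. -/
theorem linkedCylinder12_hasK6Minor (k : ℕ) (hk : 3 ≤ k) (a₁ b₁ a₂ b₂ : Fin k)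
    (ha : a₁ ≠ a₂) (hb : b₁ ≠ b₂) :
    HasMinor (linkedCylinder12 k a₁ b₁ a₂ b₂) (⊤ : SimpleGraph (Fin 6)) := by
  obtain ⟨β₁, β₂, hβ, hminor⟩ := linkedCylinder12_exists_hasMinor_three hk ha hb
  exact hminor.trans (linkedCylinder12_three_hasK6Minor hβ)
end

section
/- A Möbius pinwheel with 4 vanes contains K_6 as a minor. -/
open SimpleGraph

/-- The pinwheel with t vanes. Vertices: `.inl (i, j)` is the vertex v^(i+1)_(j+1)
of the cycle C^(i+1) (0-indexed), `.inr (.inl m)` is the vane vertex w_(m+1), and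
`.inr (.inr ())` is the hub x. -/
def pinwheel (t : ℕ) : SimpleGraph ((Fin 2 × Fin (2 * t)) ⊕ (Fin t ⊕ Unit)) :=
  SimpleGraph.fromRel fun a b =>
    match a, b with
    | .inl (i, j), .inl (i', j') =>
        (i = i' ∧ ((j : ℕ) + 1) % (2 * t) = (j' : ℕ)) ∨
        ((j : ℕ) = (j' : ℕ) ∧ (j : ℕ) % 2 = 1 ∧ i ≠ i')
    | .inr (.inl m), .inl (_, j) => (j : ℕ) = 2 * (m : ℕ)
    | .inr (.inr _), .inr (.inl _) => True
    | _, _ => False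

/-- The Möbius pinwheel with t vanes: as the pinwheel but with the two edges
closing the cycles replaced by the two "crossed" edges v¹_2t v²₁ and v²_2t v¹₁. -/
def mobiusPinwheel (t : ℕ) : SimpleGraph ((Fin 2 × Fin (2 * t)) ⊕ (Fin t ⊕ Unit)) :=
  SimpleGraph.fromRel fun a b =>
    match a, b with
    | .inl (i, j), .inl (i', j') =>
        (i = i' ∧ (j : ℕ) + 1 = (j' : ℕ)) ∨
        ((j : ℕ) = 2 * t - 1 ∧ (j' : ℕ) = 0 ∧ i ≠ i') ∨
        ((j : ℕ) = (j' : ℕ) ∧ (j : ℕ) % 2 = 1 ∧ i ≠ i')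
    | .inr (.inl m), .inl (_, j) => (j : ℕ) = 2 * (m : ℕ)
    | .inr (.inr _), .inr (.inl _) => True
    | _, _ => False

/- ---- auxiliary material ---- -/

instance mp4DecAdj : DecidableRel (mobiusPinwheel 4).Adj := fun a b => by
  rw [mobiusPinwheel, SimpleGraph.fromRel_adj]
  rcases a with ⟨i,j⟩|(m|u) <;> rcases b with ⟨i',j'⟩|(m'|u') <;> exact inferInstance

/-- vertex type of the Möbius pinwheel with 4 vanes -/
abbrev MPV : Type := (Fin 2 × Fin (2 * 4)) ⊕ (Fin 4 ⊕ Unit)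

abbrev mpc (i : Fin 2) (j : Fin (2 * 4)) : MPV := Sum.inl (i, j)
abbrev mpw (m : Fin 4) : MPV := Sum.inr (Sum.inl m)
abbrev mpx : MPV := Sum.inr (Sum.inr ())

/-- the six branch sets, as finsets -/
def mpF : Fin 6 → Finset MPV :=
  ![ {mpc 0 0, mpc 1 7, mpc 1 6},
     {mpc 0 1, mpc 0 2, mpc 0 3},
     {mpc 0 4, mpc 0 5, mpc 0 6, mpc 0 7},
     {mpw 0, mpc 1 0, mpc 1 1, mpc 1 2},
     {mpc 1 3, mpc 1 4, mpc 1 5},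
     {mpw 1, mpw 2, mpw 3, mpx} ]

lemma conn_aux {V : Type*} (G : SimpleGraph V) (s : Set V) (h : V) (hh : h ∈ s)
    (hr : ∀ v (hv : v ∈ s), (G.induce s).Reachable ⟨v, hv⟩ ⟨h, hh⟩) :
    (G.induce s).Connected := by
  rw [SimpleGraph.connected_iff]
  exact ⟨fun u v => (hr u.1 u.2).trans (hr v.1 v.2).symm, ⟨⟨h, hh⟩⟩⟩

lemma adjr {V : Type*} (G : SimpleGraph V) (s : Set V) (a b : V) (ha : a ∈ s) (hb : b ∈ s)
    (hab : G.Adj a b) : (G.induce s).Reachable ⟨a, ha⟩ ⟨b, hb⟩ :=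
  SimpleGraph.Adj.reachable hab

/-- a Möbius pinwheel with 4 vanes contains K₆ as a minor. -/
theorem mobiusPinwheel_four_hasK6Minor :
    HasMinor (mobiusPinwheel 4) (⊤ : SimpleGraph (Fin 6)) := by
  refine ⟨fun k => ↑(mpF k), ?_, ?_, ?_, ?_⟩
  · intro k
    rw [Finset.coe_nonempty]
    fin_cases k <;> decide
  · intro k
    fin_cases k
    · refine conn_aux _ _ (mpc 1 7) (Finset.mem_coe.mpr (by decide)) ?_
      intro v hv
      have hv' : v ∈ ({mpc 0 0, mpc 1 7, mpc 1 6} : Finset MPV) := hv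
      fin_cases hv'
      · exact adjr _ _ (mpc 0 0) (mpc 1 7) hv _ (by decide)
      · exact Reachable.refl _
      · exact adjr _ _ (mpc 1 6) (mpc 1 7) hv _ (by decide)
    · refine conn_aux _ _ (mpc 0 2) (Finset.mem_coe.mpr (by decide)) ?_
      intro v hv
      have hv' : v ∈ ({mpc 0 1, mpc 0 2, mpc 0 3} : Finset MPV) := hv
      fin_cases hv'
      · exact adjr _ _ (mpc 0 1) (mpc 0 2) hv _ (by decide)
      · exact Reachable.refl _
      · exact adjr _ _ (mpc 0 3) (mpc 0 2) hv _ (by decide)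
    · refine conn_aux _ _ (mpc 0 5) (Finset.mem_coe.mpr (by decide)) ?_
      intro v hv
      have hv' : v ∈ ({mpc 0 4, mpc 0 5, mpc 0 6, mpc 0 7} : Finset MPV) := hv
      fin_cases hv'
      · exact adjr _ _ (mpc 0 4) (mpc 0 5) hv _ (by decide)
      · exact Reachable.refl _
      · exact adjr _ _ (mpc 0 6) (mpc 0 5) hv _ (by decide)
      · exact (adjr _ _ (mpc 0 7) (mpc 0 6) hv (Finset.mem_coe.mpr (by decide))
            (by decide)).trans
          (adjr _ _ (mpc 0 6) (mpc 0 5) (Finset.mem_coe.mpr (by decide)) _ (by decide))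
    · refine conn_aux _ _ (mpc 1 1) (Finset.mem_coe.mpr (by decide)) ?_
      intro v hv
      have hv' : v ∈ ({mpw 0, mpc 1 0, mpc 1 1, mpc 1 2} : Finset MPV) := hv
      fin_cases hv'
      · exact (adjr _ _ (mpw 0) (mpc 1 0) hv (Finset.mem_coe.mpr (by decide))
            (by decide)).trans
          (adjr _ _ (mpc 1 0) (mpc 1 1) (Finset.mem_coe.mpr (by decide)) _ (by decide))
      · exact adjr _ _ (mpc 1 0) (mpc 1 1) hv _ (by decide)
      · exact Reachable.refl _
      · exact adjr _ _ (mpc 1 2) (mpc 1 1) hv _ (by decide)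
    · refine conn_aux _ _ (mpc 1 4) (Finset.mem_coe.mpr (by decide)) ?_
      intro v hv
      have hv' : v ∈ ({mpc 1 3, mpc 1 4, mpc 1 5} : Finset MPV) := hv
      fin_cases hv'
      · exact adjr _ _ (mpc 1 3) (mpc 1 4) hv _ (by decide)
      · exact Reachable.refl _
      · exact adjr _ _ (mpc 1 5) (mpc 1 4) hv _ (by decide)
    · refine conn_aux _ _ mpx (Finset.mem_coe.mpr (by decide)) ?_
      intro v hv
      have hv' : v ∈ ({mpw 1, mpw 2, mpw 3, mpx} : Finset MPV) := hv
      fin_cases hv'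
      · exact adjr _ _ (mpw 1) mpx hv _ (by decide)
      · exact adjr _ _ (mpw 2) mpx hv _ (by decide)
      · exact adjr _ _ (mpw 3) mpx hv _ (by decide)
      · exact Reachable.refl _
  · intro k₁ k₂ hne
    rw [Finset.disjoint_coe]
    fin_cases k₁ <;> fin_cases k₂ <;> first | (exact absurd rfl hne) | decide
  · intro k₁ k₂ _
    simp only [Finset.mem_coe]
    fin_cases k₁ <;> fin_cases k₂ <;> decide
end

section
/- A double crossed t-cylinder of length l, with t ≥ 5 and l ≥ 16, contains as a minor a double crossed 5-cylinder of length 6 in which the crossing edges at the top have ends v^1_1, v^3_1 and v^2_1, v^4_1, and the crossing edges at the bottom have ends v^1_6, v^3_6 and v^2_6, v^4_6. -/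
open SimpleGraph

/-- The double crossed k-cylinder of length l: k disjoint paths of l vertices,
rungs joining consecutive paths (cyclically) at each level, two crossing edges
(a₁,0)(a₃,0), (a₂,0)(a₄,0) among the first vertices and two crossing edges
(b₁,l-1)(b₃,l-1), (b₂,l-1)(b₄,l-1) among the last vertices; the crossing pattern
is expressed by requiring a₁ < a₂ < a₃ < a₄ and b₁ < b₂ < b₃ < b₄ in the theorems. -/
def doubleCrossedCylinder (k l : ℕ) (a₁ a₂ a₃ a₄ b₁ b₂ b₃ b₄ : Fin k) :
    SimpleGraph (Fin k × Fin l) :=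
  SimpleGraph.fromRel fun p q =>
    (p.1 = q.1 ∧ (p.2 : ℕ) + 1 = (q.2 : ℕ)) ∨
    (p.2 = q.2 ∧ ((p.1 : ℕ) + 1) % k = (q.1 : ℕ)) ∨
    ((p.2 : ℕ) = 0 ∧ (q.2 : ℕ) = 0 ∧
      ((p.1 = a₁ ∧ q.1 = a₃) ∨ (p.1 = a₂ ∧ q.1 = a₄))) ∨
    ((p.2 : ℕ) = l - 1 ∧ (q.2 : ℕ) = l - 1 ∧
      ((p.1 = b₁ ∧ q.1 = b₃) ∨ (p.1 = b₂ ∧ q.1 = b₄)))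

/-- row `r` is in the `i`-th canonical arc (`{i}` for `i<4`, `[4,∞)` for `i=4`). -/
def arcMem (i r : ℕ) : Prop := r = i ∨ (i = 4 ∧ 4 ≤ r)

/-- top tentacle from `(s,0)` to `(i,3)`: front along row `s`, vertical in column `i`,
back along row `i`. -/
def topT (i s r j : ℕ) : Prop :=
  (r = s ∧ j ≤ i) ∨ (j = i ∧ i ≤ r ∧ r ≤ s) ∨ (r = i ∧ i ≤ j ∧ j ≤ 3)

/-- bottom tentacle from `(s,l-1)` to `(i,10)`: front along row `s` (columns `≥ 13-i`),
vertical in column `13-i`, back along row `i` (columns `[10,13-i]`). -/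
def botT (i s r j : ℕ) : Prop :=
  (r = s ∧ 13 ≤ j + i) ∨ (j + i = 13 ∧ i ≤ r ∧ r ≤ s) ∨ (r = i ∧ 10 ≤ j ∧ j + i ≤ 13)

/-- branch set of the minor vertex `w`. -/
def BSet (t l : ℕ) (σ τ : ℕ → ℕ) (w : Fin 5 × Fin 6) : Set (Fin t × Fin l) :=
  {v | (arcMem (w.1 : ℕ) (v.1 : ℕ) ∧ (v.2 : ℕ) = 4 + (w.2 : ℕ)) ∨
    ((w.2 : ℕ) = 0 ∧ (w.1 : ℕ) < 4 ∧ topT (w.1 : ℕ) (σ (w.1 : ℕ)) (v.1 : ℕ) (v.2 : ℕ)) ∨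
    ((w.2 : ℕ) = 5 ∧ (w.1 : ℕ) < 4 ∧ botT (w.1 : ℕ) (τ (w.1 : ℕ)) (v.1 : ℕ) (v.2 : ℕ))}

def sigFun {t : ℕ} (x₁ x₂ x₃ x₄ : Fin t) : ℕ → ℕ :=
  fun i => if i = 0 then (x₁ : ℕ) else if i = 1 then (x₂ : ℕ) else if i = 2 then (x₃ : ℕ) else (x₄ : ℕ)

lemma sigFun_bounds {t : ℕ} (x₁ x₂ x₃ x₄ : Fin t)
    (h : x₁ < x₂ ∧ x₂ < x₃ ∧ x₃ < x₄) (i : ℕ) (hi : i < 4) :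
    i ≤ sigFun x₁ x₂ x₃ x₄ i ∧ sigFun x₁ x₂ x₃ x₄ i < t := by
  obtain ⟨h1, h2, h3⟩ := h
  have e1 : (x₁ : ℕ) < x₂ := h1
  have e2 : (x₂ : ℕ) < x₃ := h2
  have e3 : (x₃ : ℕ) < x₄ := h3
  have e4 : (x₄ : ℕ) < t := x₄.isLt
  interval_cases i <;> simp [sigFun] <;> omega

lemma sigFun_mono {t : ℕ} (x₁ x₂ x₃ x₄ : Fin t)
    (h : x₁ < x₂ ∧ x₂ < x₃ ∧ x₃ < x₄) (i i' : ℕ) (hi : i < i') (hi' : i' < 4) :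
    sigFun x₁ x₂ x₃ x₄ i < sigFun x₁ x₂ x₃ x₄ i' := by
  obtain ⟨h1, h2, h3⟩ := h
  have e1 : (x₁ : ℕ) < x₂ := h1
  have e2 : (x₂ : ℕ) < x₃ := h2
  have e3 : (x₃ : ℕ) < x₄ := h3
  interval_cases i' <;> interval_cases i <;> simp [sigFun] <;> omega

section adj
variable {t l : ℕ} {a₁ a₂ a₃ a₄ b₁ b₂ b₃ b₄ : Fin t}

lemma dcc_adj_col (x : Fin t) {j j' : Fin l} (h : (j : ℕ) + 1 = (j' : ℕ)) :
    (doubleCrossedCylinder t l a₁ a₂ a₃ a₄ b₁ b₂ b₃ b₄).Adj (x, j) (x, j') := by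
  rw [doubleCrossedCylinder, SimpleGraph.fromRel_adj]
  refine ⟨?_, Or.inl (Or.inl ⟨rfl, h⟩)⟩
  intro he
  have : (j : ℕ) = (j' : ℕ) := congrArg (fun p => ((p.2 : Fin l) : ℕ)) he
  omega

lemma dcc_adj_rung (j : Fin l) {x y : Fin t} (h : (x : ℕ) + 1 = (y : ℕ)) :
    (doubleCrossedCylinder t l a₁ a₂ a₃ a₄ b₁ b₂ b₃ b₄).Adj (x, j) (y, j) := by
  rw [doubleCrossedCylinder, SimpleGraph.fromRel_adj]
  refine ⟨?_, Or.inl (Or.inr (Or.inl ⟨rfl, ?_⟩))⟩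
  · intro he
    have : (x : ℕ) = (y : ℕ) := congrArg (fun p => ((p.1 : Fin t) : ℕ)) he
    omega
  · rw [h]; exact Nat.mod_eq_of_lt y.isLt

lemma dcc_adj_wrap (j : Fin l) (ht : 2 ≤ t) {x y : Fin t} (hx : (x : ℕ) = t - 1)
    (hy : (y : ℕ) = 0) :
    (doubleCrossedCylinder t l a₁ a₂ a₃ a₄ b₁ b₂ b₃ b₄).Adj (x, j) (y, j) := by
  rw [doubleCrossedCylinder, SimpleGraph.fromRel_adj]
  refine ⟨?_, Or.inl (Or.inr (Or.inl ⟨rfl, ?_⟩))⟩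
  · intro he
    have : (x : ℕ) = (y : ℕ) := congrArg (fun p => ((p.1 : Fin t) : ℕ)) he
    omega
  · rw [hx, hy]
    have : t - 1 + 1 = t := by omega
    rw [this, Nat.mod_self]

lemma dcc_adj_crossA {j j' : Fin l} (hj : (j : ℕ) = 0) (hj' : (j' : ℕ) = 0)
    {x y : Fin t} (hx : x = a₁) (hy : y = a₃) (hne : a₁ ≠ a₃) :
    (doubleCrossedCylinder t l a₁ a₂ a₃ a₄ b₁ b₂ b₃ b₄).Adj (x, j) (y, j') := by
  rw [doubleCrossedCylinder, SimpleGraph.fromRel_adj]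
  refine ⟨?_, Or.inl (Or.inr (Or.inr (Or.inl ⟨hj, hj', Or.inl ⟨hx, hy⟩⟩)))⟩
  intro he
  exact hne (hx ▸ hy ▸ congrArg Prod.fst he)

lemma dcc_adj_crossA' {j j' : Fin l} (hj : (j : ℕ) = 0) (hj' : (j' : ℕ) = 0)
    {x y : Fin t} (hx : x = a₂) (hy : y = a₄) (hne : a₂ ≠ a₄) :
    (doubleCrossedCylinder t l a₁ a₂ a₃ a₄ b₁ b₂ b₃ b₄).Adj (x, j) (y, j') := by
  rw [doubleCrossedCylinder, SimpleGraph.fromRel_adj]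
  refine ⟨?_, Or.inl (Or.inr (Or.inr (Or.inl ⟨hj, hj', Or.inr ⟨hx, hy⟩⟩)))⟩
  intro he
  exact hne (hx ▸ hy ▸ congrArg Prod.fst he)

lemma dcc_adj_crossB {j j' : Fin l} (hj : (j : ℕ) = l - 1) (hj' : (j' : ℕ) = l - 1)
    {x y : Fin t} (hx : x = b₁) (hy : y = b₃) (hne : b₁ ≠ b₃) :
    (doubleCrossedCylinder t l a₁ a₂ a₃ a₄ b₁ b₂ b₃ b₄).Adj (x, j) (y, j') := by
  rw [doubleCrossedCylinder, SimpleGraph.fromRel_adj]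
  refine ⟨?_, Or.inl (Or.inr (Or.inr (Or.inr ⟨hj, hj', Or.inl ⟨hx, hy⟩⟩)))⟩
  intro he
  exact hne (hx ▸ hy ▸ congrArg Prod.fst he)

lemma dcc_adj_crossB' {j j' : Fin l} (hj : (j : ℕ) = l - 1) (hj' : (j' : ℕ) = l - 1)
    {x y : Fin t} (hx : x = b₂) (hy : y = b₄) (hne : b₂ ≠ b₄) :
    (doubleCrossedCylinder t l a₁ a₂ a₃ a₄ b₁ b₂ b₃ b₄).Adj (x, j) (y, j') := by
  rw [doubleCrossedCylinder, SimpleGraph.fromRel_adj]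
  refine ⟨?_, Or.inl (Or.inr (Or.inr (Or.inr ⟨hj, hj', Or.inr ⟨hx, hy⟩⟩)))⟩
  intro he
  exact hne (hx ▸ hy ▸ congrArg Prod.fst he)

end adj

lemma connected_of_descent {V : Type*} (G : SimpleGraph V) (S : Set V) (b : V) (hb : b ∈ S)
    (f : V → ℕ)
    (h : ∀ v ∈ S, v ≠ b → ∃ w, w ∈ S ∧ G.Adj w v ∧ f w < f v) :
    (G.induce S).Connected := by
  rw [SimpleGraph.connected_iff]
  refine ⟨?_, ⟨⟨b, hb⟩⟩⟩
  have key : ∀ n (v : S), f v ≤ n → (G.induce S).Reachable ⟨b, hb⟩ v := by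
    intro n
    induction n with
    | zero =>
      intro v hv
      by_cases hvb : (v : V) = b
      · have : v = ⟨b, hb⟩ := Subtype.ext hvb
        rw [this]
      · obtain ⟨w, hw, hadj, hlt⟩ := h v v.prop hvb
        omega
    | succ n ih =>
      intro v hv
      by_cases hvb : (v : V) = b
      · have : v = ⟨b, hb⟩ := Subtype.ext hvb
        rw [this]
      · obtain ⟨w, hw, hadj, hlt⟩ := h v v.prop hvb
        have hr := ih ⟨w, hw⟩ (show f w ≤ n by omega)
        exact hr.trans (SimpleGraph.Adj.reachable (by exact hadj))
  intro u v
  exact ((key (f u) u le_rfl).symm.trans (key (f v) v le_rfl))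

/-- a double crossed t-cylinder of length l (t ≥ 5, l ≥ 16) contains
as a minor a double crossed 5-cylinder of length 6 in which the crossing edges at
the top have ends v¹₁, v³₁ and v²₁, v⁴₁ and the crossing edges at the bottom have
ends v¹₆, v³₆ and v²₆, v⁴₆. -/
theorem doubleCrossedCylinder_has_standard56Minor (t l : ℕ) (ht : 5 ≤ t) (hl : 16 ≤ l)
    (a₁ a₂ a₃ a₄ b₁ b₂ b₃ b₄ : Fin t)
    (ha : a₁ < a₂ ∧ a₂ < a₃ ∧ a₃ < a₄) (hb : b₁ < b₂ ∧ b₂ < b₃ ∧ b₃ < b₄) :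
    HasMinor (doubleCrossedCylinder t l a₁ a₂ a₃ a₄ b₁ b₂ b₃ b₄)
      (doubleCrossedCylinder 5 6 0 1 2 3 0 1 2 3) := by
  have hσb := sigFun_bounds a₁ a₂ a₃ a₄ ha
  have hσm := sigFun_mono a₁ a₂ a₃ a₄ ha
  have hτb := sigFun_bounds b₁ b₂ b₃ b₄ hb
  have hτm := sigFun_mono b₁ b₂ b₃ b₄ hb
  refine ⟨BSet t l (sigFun a₁ a₂ a₃ a₄) (sigFun b₁ b₂ b₃ b₄), ?_, ?_, ?_, ?_⟩
  · -- Nonempty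
    intro w
    have h1 : (w.1 : ℕ) < 5 := w.1.isLt
    have h2 : (w.2 : ℕ) < 6 := w.2.isLt
    exact ⟨(⟨(w.1 : ℕ), by omega⟩, ⟨4 + (w.2 : ℕ), by omega⟩), Or.inl ⟨Or.inl rfl, rfl⟩⟩
  · -- Connected
    rintro ⟨wi, wc⟩
    have hI : (wi : ℕ) < 5 := wi.isLt
    have hC : (wc : ℕ) < 6 := wc.isLt
    apply connected_of_descent _ _
      ((⟨(wi : ℕ), by omega⟩, ⟨4 + (wc : ℕ), by omega⟩) : Fin t × Fin l)
      (Or.inl ⟨Or.inl rfl, rfl⟩)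
      (fun v => ((v.1 : ℕ) - (wi : ℕ)) + (4 - (v.2 : ℕ)) + ((wi : ℕ) - (v.2 : ℕ)) +
        ((v.2 : ℕ) - 9))
    rintro ⟨v1, v2⟩ hv hne
    have hr : (v1 : ℕ) < t := v1.isLt
    have hj : (v2 : ℕ) < l := v2.isLt
    have hne' : ¬((v1 : ℕ) = (wi : ℕ) ∧ (v2 : ℕ) = 4 + (wc : ℕ)) := by
      rintro ⟨h1, h2⟩
      exact hne (Prod.ext (Fin.ext h1) (Fin.ext h2))
    simp only [BSet, Set.mem_setOf_eq, arcMem, topT, botT] at hv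
    rcases hv with ⟨harc, hcol⟩ | ⟨hc0, hI4, htop⟩ | ⟨hc5, hI4, hbot⟩
    · -- body: move down
      refine ⟨(⟨(v1 : ℕ) - 1, by omega⟩, v2), ?_, dcc_adj_rung v2 (by simp only [Fin.val_mk]; omega), ?_⟩
      · simp only [BSet, Set.mem_setOf_eq, arcMem, topT, botT, Fin.val_mk]
        exact Or.inl ⟨Or.inr ⟨by omega, by omega⟩, hcol⟩
      · simp only [Fin.val_mk]
        omega
    · -- top tentacle
      have hs := hσb (wi : ℕ) hI4
      by_cases hd : (v2 : ℕ) = (wi : ℕ) ∧ (wi : ℕ) < (v1 : ℕ)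
      · -- move down
        refine ⟨(⟨(v1 : ℕ) - 1, by omega⟩, v2), ?_, dcc_adj_rung v2 (by simp only [Fin.val_mk]; omega), ?_⟩
        · simp only [BSet, Set.mem_setOf_eq, arcMem, topT, botT, Fin.val_mk]
          exact Or.inr (Or.inl ⟨hc0, hI4, Or.inr (Or.inl ⟨by omega, by omega, by omega⟩)⟩)
        · simp only [Fin.val_mk]
          omega
      · -- move right
        refine ⟨(v1, ⟨(v2 : ℕ) + 1, by omega⟩), ?_, (dcc_adj_col v1 (by simp only [Fin.val_mk])).symm, ?_⟩
        · simp only [BSet, Set.mem_setOf_eq, arcMem, topT, botT, Fin.val_mk]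
          by_cases hf : (v2 : ℕ) < (wi : ℕ)
          · exact Or.inr (Or.inl ⟨hc0, hI4, Or.inl ⟨by omega, by omega⟩⟩)
          · have hv1 : (v1 : ℕ) = (wi : ℕ) := by omega
            by_cases hlast : (v2 : ℕ) + 1 = 4
            · exact Or.inl ⟨Or.inl (by omega), by first | trivial | omega⟩
            · exact Or.inr (Or.inl ⟨hc0, hI4, Or.inr (Or.inr ⟨by omega, by omega, by omega⟩)⟩)
        · simp only [Fin.val_mk]
          omega
    · -- bottom tentacle
      have hs := hτb (wi : ℕ) hI4
      by_cases hd : (v2 : ℕ) + (wi : ℕ) = 13 ∧ (wi : ℕ) < (v1 : ℕ)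
      · -- move down
        refine ⟨(⟨(v1 : ℕ) - 1, by omega⟩, v2), ?_, dcc_adj_rung v2 (by simp only [Fin.val_mk]; omega), ?_⟩
        · simp only [BSet, Set.mem_setOf_eq, arcMem, topT, botT, Fin.val_mk]
          exact Or.inr (Or.inr ⟨hc5, hI4, Or.inr (Or.inl ⟨by omega, by omega, by omega⟩)⟩)
        · simp only [Fin.val_mk]
          omega
      · -- move left
        have hj10 : 10 ≤ (v2 : ℕ) := by omega
        refine ⟨(v1, ⟨(v2 : ℕ) - 1, by omega⟩), ?_, dcc_adj_col v1 (by simp only [Fin.val_mk]; omega), ?_⟩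
        · simp only [BSet, Set.mem_setOf_eq, arcMem, topT, botT, Fin.val_mk]
          by_cases hf : 13 < (v2 : ℕ) + (wi : ℕ)
          · exact Or.inr (Or.inr ⟨hc5, hI4, Or.inl ⟨by omega, by omega⟩⟩)
          · have hv1 : (v1 : ℕ) = (wi : ℕ) := by omega
            by_cases hlast : (v2 : ℕ) - 1 = 9
            · exact Or.inl ⟨Or.inl (by omega), by first | trivial | omega⟩
            · exact Or.inr (Or.inr ⟨hc5, hI4, Or.inr (Or.inr ⟨by omega, by omega, by omega⟩)⟩)
        · simp only [Fin.val_mk]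
          omega
  · -- Disjoint
    intro w₁ w₂ hne
    rw [Set.disjoint_left]
    rintro ⟨v1, v2⟩ h1 h2
    have hne' : ¬((w₁.1 : ℕ) = (w₂.1 : ℕ) ∧ (w₁.2 : ℕ) = (w₂.2 : ℕ)) := by
      rintro ⟨x, y⟩
      exact hne (Prod.ext (Fin.ext x) (Fin.ext y))
    have hw1 : (w₁.1 : ℕ) < 5 := w₁.1.isLt
    have hw2 : (w₂.1 : ℕ) < 5 := w₂.1.isLt
    have hc1 : (w₁.2 : ℕ) < 6 := w₁.2.isLt
    have hc2 : (w₂.2 : ℕ) < 6 := w₂.2.isLt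
    simp only [BSet, Set.mem_setOf_eq, arcMem, topT, botT] at h1 h2
    rcases h1 with ⟨A1, C1⟩ | ⟨c1, i1, T1⟩ | ⟨c1, i1, T1⟩
    · rcases h2 with ⟨A2, C2⟩ | ⟨c2, i2, T2⟩ | ⟨c2, i2, T2⟩
      · omega
      · omega
      · omega
    · rcases h2 with ⟨A2, C2⟩ | ⟨c2, i2, T2⟩ | ⟨c2, i2, T2⟩
      · omega
      · have e1 := hσb (w₁.1 : ℕ) i1
        have e2 := hσb (w₂.1 : ℕ) i2
        rcases Nat.lt_trichotomy (w₁.1 : ℕ) (w₂.1 : ℕ) with hlt | heq | hgt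
        · have := hσm (w₁.1 : ℕ) (w₂.1 : ℕ) hlt i2
          omega
        · omega
        · have := hσm (w₂.1 : ℕ) (w₁.1 : ℕ) hgt i1
          omega
      · omega
    · rcases h2 with ⟨A2, C2⟩ | ⟨c2, i2, T2⟩ | ⟨c2, i2, T2⟩
      · omega
      · omega
      · have e1 := hτb (w₁.1 : ℕ) i1
        have e2 := hτb (w₂.1 : ℕ) i2
        rcases Nat.lt_trichotomy (w₁.1 : ℕ) (w₂.1 : ℕ) with hlt | heq | hgt
        · have := hτm (w₁.1 : ℕ) (w₂.1 : ℕ) hlt i2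
          omega
        · omega
        · have := hτm (w₂.1 : ℕ) (w₁.1 : ℕ) hgt i1
          omega
  · -- Edges
    have aux : ∀ u₁ u₂ : Fin 5 × Fin 6,
        ((u₁.1 = u₂.1 ∧ (u₁.2 : ℕ) + 1 = (u₂.2 : ℕ)) ∨
         (u₁.2 = u₂.2 ∧ ((u₁.1 : ℕ) + 1) % 5 = (u₂.1 : ℕ)) ∨
         ((u₁.2 : ℕ) = 0 ∧ (u₂.2 : ℕ) = 0 ∧
           ((u₁.1 = 0 ∧ u₂.1 = 2) ∨ (u₁.1 = 1 ∧ u₂.1 = 3))) ∨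
         ((u₁.2 : ℕ) = 6 - 1 ∧ (u₂.2 : ℕ) = 6 - 1 ∧
           ((u₁.1 = 0 ∧ u₂.1 = 2) ∨ (u₁.1 = 1 ∧ u₂.1 = 3)))) →
        ∃ v₁ ∈ BSet t l (sigFun a₁ a₂ a₃ a₄) (sigFun b₁ b₂ b₃ b₄) u₁,
          ∃ v₂ ∈ BSet t l (sigFun a₁ a₂ a₃ a₄) (sigFun b₁ b₂ b₃ b₄) u₂,
            (doubleCrossedCylinder t l a₁ a₂ a₃ a₄ b₁ b₂ b₃ b₄).Adj v₁ v₂ := by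
      rintro ⟨p1, p2⟩ ⟨q1, q2⟩ hrel
      dsimp only at hrel
      have hp1 : (p1 : ℕ) < 5 := p1.isLt
      have hq1 : (q1 : ℕ) < 5 := q1.isLt
      have hp2 : (p2 : ℕ) < 6 := p2.isLt
      have hq2 : (q2 : ℕ) < 6 := q2.isLt
      rcases hrel with ⟨e1, e2⟩ | ⟨e1, e2⟩ | ⟨e1, e2, e3⟩ | ⟨e1, e2, e3⟩
      · -- path edge
        obtain rfl : p1 = q1 := e1
        exact ⟨(⟨(p1 : ℕ), by omega⟩, ⟨4 + (p2 : ℕ), by omega⟩), Or.inl ⟨Or.inl rfl, rfl⟩,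
          (⟨(p1 : ℕ), by omega⟩, ⟨4 + (q2 : ℕ), by omega⟩), Or.inl ⟨Or.inl rfl, rfl⟩,
          dcc_adj_col _ (by simp only [Fin.val_mk]; omega)⟩
      · -- rung edge
        obtain rfl : p2 = q2 := e1
        by_cases h4 : (p1 : ℕ) < 4
        · exact ⟨(⟨(p1 : ℕ), by omega⟩, ⟨4 + (p2 : ℕ), by omega⟩), Or.inl ⟨Or.inl rfl, rfl⟩,
            (⟨(q1 : ℕ), by omega⟩, ⟨4 + (p2 : ℕ), by omega⟩), Or.inl ⟨Or.inl rfl, rfl⟩,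
            dcc_adj_rung _ (by simp only [Fin.val_mk]; omega)⟩
        · refine ⟨(⟨t - 1, by omega⟩, ⟨4 + (p2 : ℕ), by omega⟩), ?_,
            (⟨0, by omega⟩, ⟨4 + (p2 : ℕ), by omega⟩), ?_,
            dcc_adj_wrap _ (by omega) rfl rfl⟩
          · simp only [BSet, Set.mem_setOf_eq, arcMem, topT, botT, Fin.val_mk]
            exact Or.inl ⟨Or.inr ⟨by omega, by omega⟩, by first | trivial | omega⟩
          · simp only [BSet, Set.mem_setOf_eq, arcMem, topT, botT, Fin.val_mk]
            exact Or.inl ⟨Or.inl (by omega), by first | trivial | omega⟩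
      · -- top crossing
        rcases e3 with ⟨f1, f2⟩ | ⟨f1, f2⟩
        · have g1 : (p1 : ℕ) = 0 := by rw [f1]; rfl
          have g2 : (q1 : ℕ) = 2 := by rw [f2]; rfl
          have s1 : sigFun a₁ a₂ a₃ a₄ (p1 : ℕ) = (a₁ : ℕ) := by rw [g1]; rfl
          have s2 : sigFun a₁ a₂ a₃ a₄ (q1 : ℕ) = (a₃ : ℕ) := by rw [g2]; rfl
          refine ⟨(a₁, ⟨0, by omega⟩), ?_, (a₃, ⟨0, by omega⟩), ?_,
            dcc_adj_crossA rfl rfl rfl rfl (by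
              intro hcon
              have h13 : (a₁ : ℕ) < (a₃ : ℕ) := lt_trans ha.1 ha.2.1
              rw [hcon] at h13
              omega)⟩
          · simp only [BSet, Set.mem_setOf_eq, arcMem, topT, botT, Fin.val_mk]
            exact Or.inr (Or.inl ⟨e1, by omega, Or.inl ⟨by omega, by omega⟩⟩)
          · simp only [BSet, Set.mem_setOf_eq, arcMem, topT, botT, Fin.val_mk]
            exact Or.inr (Or.inl ⟨e2, by omega, Or.inl ⟨by omega, by omega⟩⟩)
        · have g1 : (p1 : ℕ) = 1 := by rw [f1]; rfl
          have g2 : (q1 : ℕ) = 3 := by rw [f2]; rfl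
          have s1 : sigFun a₁ a₂ a₃ a₄ (p1 : ℕ) = (a₂ : ℕ) := by rw [g1]; rfl
          have s2 : sigFun a₁ a₂ a₃ a₄ (q1 : ℕ) = (a₄ : ℕ) := by rw [g2]; rfl
          refine ⟨(a₂, ⟨0, by omega⟩), ?_, (a₄, ⟨0, by omega⟩), ?_,
            dcc_adj_crossA' rfl rfl rfl rfl (by
              intro hcon
              have h24 : (a₂ : ℕ) < (a₄ : ℕ) := lt_trans ha.2.1 ha.2.2
              rw [hcon] at h24
              omega)⟩
          · simp only [BSet, Set.mem_setOf_eq, arcMem, topT, botT, Fin.val_mk]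
            exact Or.inr (Or.inl ⟨e1, by omega, Or.inl ⟨by omega, by omega⟩⟩)
          · simp only [BSet, Set.mem_setOf_eq, arcMem, topT, botT, Fin.val_mk]
            exact Or.inr (Or.inl ⟨e2, by omega, Or.inl ⟨by omega, by omega⟩⟩)
      · -- bottom crossing
        rcases e3 with ⟨f1, f2⟩ | ⟨f1, f2⟩
        · have g1 : (p1 : ℕ) = 0 := by rw [f1]; rfl
          have g2 : (q1 : ℕ) = 2 := by rw [f2]; rfl
          have s1 : sigFun b₁ b₂ b₃ b₄ (p1 : ℕ) = (b₁ : ℕ) := by rw [g1]; rfl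
          have s2 : sigFun b₁ b₂ b₃ b₄ (q1 : ℕ) = (b₃ : ℕ) := by rw [g2]; rfl
          refine ⟨(b₁, ⟨l - 1, by omega⟩), ?_, (b₃, ⟨l - 1, by omega⟩), ?_,
            dcc_adj_crossB rfl rfl rfl rfl (by
              intro hcon
              have h13 : (b₁ : ℕ) < (b₃ : ℕ) := lt_trans hb.1 hb.2.1
              rw [hcon] at h13
              omega)⟩
          · simp only [BSet, Set.mem_setOf_eq, arcMem, topT, botT, Fin.val_mk]
            exact Or.inr (Or.inr ⟨by omega, by omega, Or.inl ⟨by omega, by omega⟩⟩)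
          · simp only [BSet, Set.mem_setOf_eq, arcMem, topT, botT, Fin.val_mk]
            exact Or.inr (Or.inr ⟨by omega, by omega, Or.inl ⟨by omega, by omega⟩⟩)
        · have g1 : (p1 : ℕ) = 1 := by rw [f1]; rfl
          have g2 : (q1 : ℕ) = 3 := by rw [f2]; rfl
          have s1 : sigFun b₁ b₂ b₃ b₄ (p1 : ℕ) = (b₂ : ℕ) := by rw [g1]; rfl
          have s2 : sigFun b₁ b₂ b₃ b₄ (q1 : ℕ) = (b₄ : ℕ) := by rw [g2]; rfl
          refine ⟨(b₂, ⟨l - 1, by omega⟩), ?_, (b₄, ⟨l - 1, by omega⟩), ?_,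
            dcc_adj_crossB' rfl rfl rfl rfl (by
              intro hcon
              have h24 : (b₂ : ℕ) < (b₄ : ℕ) := lt_trans hb.2.1 hb.2.2
              rw [hcon] at h24
              omega)⟩
          · simp only [BSet, Set.mem_setOf_eq, arcMem, topT, botT, Fin.val_mk]
            exact Or.inr (Or.inr ⟨by omega, by omega, Or.inl ⟨by omega, by omega⟩⟩)
          · simp only [BSet, Set.mem_setOf_eq, arcMem, topT, botT, Fin.val_mk]
            exact Or.inr (Or.inr ⟨by omega, by omega, Or.inl ⟨by omega, by omega⟩⟩)
    intro w₁ w₂ hadj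
    simp only [doubleCrossedCylinder, SimpleGraph.fromRel_adj] at hadj
    obtain ⟨hner, hrel | hrel⟩ := hadj
    · exact aux w₁ w₂ hrel
    · obtain ⟨x1, hx1, x2, hx2, hxy⟩ := aux w₂ w₁ hrel
      exact ⟨x2, hx2, x1, hx1, hxy.symm⟩
end

section
/- Assume Hypothesis H and that there exist 6·C(q,6) distinct indices i with 1 ≤ i ≤ l−1 such that G[W_i] contains a non-trivial P-bridge attaching only to trivial foundational paths. Then G has a K_6 minor. (Contrapositive of Lemma on non-trivial bridges: under Hypothesis H no such 6·C(q,6) indices exist.) -/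
open SimpleGraph

/-- (L1), (L2): linear decomposition of length l. -/
def IsLinDecomp {V : Type*} (G : SimpleGraph V) (l : ℕ) (W : ℕ → Set V) : Prop :=
  (∀ v : V, ∃ i ≤ l, v ∈ W i) ∧
  (∀ u v : V, G.Adj u v → ∃ i ≤ l, u ∈ W i ∧ v ∈ W i) ∧
  (∀ i j k : ℕ, i ≤ j → j ≤ k → k ≤ l → W i ∩ W k ⊆ W j)

/-- (L3): adhesion q. -/
def HasAdhesion {V : Type*} (l q : ℕ) (W : ℕ → Set V) : Prop :=
  ∀ i, 1 ≤ i → i ≤ l → (W (i - 1) ∩ W i).ncard = q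

/-- (L4). -/
def LinDecompProper {V : Type*} (l : ℕ) (W : ℕ → Set V) : Prop :=
  ∀ i, 1 ≤ i → i ≤ l → ¬ (W (i - 1) ⊆ W i) ∧ ¬ (W i ⊆ W (i - 1))

/-- The data of a foundational linkage (L5): q disjoint paths from W₀ ∩ W₁ to
W_{l-1} ∩ W_l. -/
def IsFoundLinkage {V : Type*} (G : SimpleGraph V) (l q : ℕ) (W : ℕ → Set V)
    (a b : Fin q → V) (P : ∀ j, G.Walk (a j) (b j)) : Prop :=
  (∀ j, (P j).IsPath) ∧
  (∀ j j', j ≠ j' → ∀ x ∈ (P j).support, x ∉ (P j').support) ∧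
  (∀ j, a j ∈ W 0 ∩ W 1 ∧ b j ∈ W (l - 1) ∩ W l)

/-- The subgraph that is the union of the paths of the linkage. -/
def linkSub {V : Type*} (G : SimpleGraph V) (q : ℕ) (a b : Fin q → V)
    (P : ∀ j, G.Walk (a j) (b j)) : G.Subgraph :=
  ⨆ j, (P j).toSubgraph

def IsCompOf {V : Type*} (G : SimpleGraph V) (A C : Set V) : Prop :=
  C ⊆ A ∧ C.Nonempty ∧ (G.induce C).Connected ∧
    ∀ D : Set V, C ⊆ D → D ⊆ A → (G.induce D).Connected → D ⊆ C

/-- B is an S-bridge of the subgraph of G induced on A. -/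
def IsBridgeIn {V : Type*} (G : SimpleGraph V) (A : Set V) (S : G.Subgraph)
    (B : G.Subgraph) : Prop :=
  B.verts ⊆ A ∧ Disjoint B.edgeSet S.edgeSet ∧
  ((∃ x y, x ∈ S.verts ∧ y ∈ S.verts ∧ G.Adj x y ∧
      B.verts = {x, y} ∧ B.edgeSet = {s(x, y)}) ∨
    ∃ C : Set V, IsCompOf G (A \ S.verts) C ∧
      B.verts = C ∪ {v ∈ S.verts | ∃ x ∈ C, G.Adj x v} ∧
      B.edgeSet = {e ∈ G.edgeSet | (∃ x ∈ C, x ∈ e) ∧ ∀ y ∈ e, y ∈ A})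

/-- The foundational paths j and j' are bridge adjacent in W i. -/
def BridgeAdjAt {V : Type*} (G : SimpleGraph V) (W : ℕ → Set V) (q : ℕ)
    (a b : Fin q → V) (P : ∀ j, G.Walk (a j) (b j)) (i : ℕ) (j j' : Fin q) :
    Prop :=
  ∃ B : G.Subgraph, IsBridgeIn G (W i) (linkSub G q a b P) B ∧
    (∃ x ∈ B.verts, x ∈ (P j).support) ∧ (∃ x ∈ B.verts, x ∈ (P j').support)

/-- (L6) for p = 6: if some bridge of G[W i] attaches to a non-trivial
foundational path P j and to no other non-trivial foundational path, then P j is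
bridge adjacent in W i to at least 4 trivial foundational paths. -/
def CondL6 {V : Type*} (G : SimpleGraph V) (l q : ℕ) (W : ℕ → Set V)
    (a b : Fin q → V) (P : ∀ j, G.Walk (a j) (b j)) : Prop :=
  ∀ i, 1 ≤ i → i ≤ l - 1 → ∀ j : Fin q, 1 ≤ (P j).length →
    (∃ B : G.Subgraph, IsBridgeIn G (W i) (linkSub G q a b P) B ∧
      (∃ x ∈ B.verts, x ∈ (P j).support) ∧
      ∀ j' : Fin q, j' ≠ j → 1 ≤ (P j').length →
        ∀ x ∈ B.verts, x ∉ (P j').support) →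
    4 ≤ {j' : Fin q | (P j').length = 0 ∧ BridgeAdjAt G W q a b P i j j'}.ncard

/-- (L7): if the restriction of a foundational path to some W i is a single
vertex, then so are all its restrictions to W k, 1 ≤ k ≤ l-1. -/
def CondL7 {V : Type*} (G : SimpleGraph V) (l q : ℕ) (W : ℕ → Set V)
    (a b : Fin q → V) (P : ∀ j, G.Walk (a j) (b j)) : Prop :=
  ∀ j : Fin q,
    (∃ i, 1 ≤ i ∧ i ≤ l - 1 ∧ ({v | v ∈ (P j).support} ∩ W i).ncard = 1) →
    ∀ k, 1 ≤ k → k ≤ l - 1 → ({v | v ∈ (P j).support} ∩ W k).ncard = 1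

/-- (L8): bridge adjacency does not depend on the index i. -/
def CondL8 {V : Type*} (G : SimpleGraph V) (l q : ℕ) (W : ℕ → Set V)
    (a b : Fin q → V) (P : ∀ j, G.Walk (a j) (b j)) : Prop :=
  ∀ j j' : Fin q, j ≠ j' →
    (∃ k, 1 ≤ k ∧ k ≤ l - 1 ∧ BridgeAdjAt G W q a b P k j j') →
    ∀ k', 1 ≤ k' → k' ≤ l - 1 → BridgeAdjAt G W q a b P k' j j'

/-- (L9) for p = 6: for nested sets 𝒫₁ ⊆ 𝒫₂ of foundational paths with
|𝒫₁| + |𝒫₂| ≤ 6 and all members of 𝒫₁ non-trivial, there is a linkage of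
cardinality |𝒫₁| from W₀ ∩ W₁ ∩ V(𝒫₁) to W_{l-1} ∩ W_l ∩ V(𝒫₁) inside
G[W₀ ∪ W_l] ∪ ⋃ (𝒫 − 𝒫₂). -/
def CondL9 {V : Type*} (G : SimpleGraph V) (l q : ℕ) (W : ℕ → Set V)
    (a b : Fin q → V) (P : ∀ j, G.Walk (a j) (b j)) : Prop :=
  ∀ S₁ S₂ : Finset (Fin q), S₁ ⊆ S₂ → S₁.card + S₂.card ≤ 6 →
    (∀ j ∈ S₁, 1 ≤ (P j).length) →
    ∃ (x y : {j // j ∈ S₁} → V) (Q : ∀ j, G.Walk (x j) (y j)),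
      (∀ j, (Q j).IsPath) ∧
      (∀ j j', j ≠ j' → ∀ w ∈ (Q j).support, w ∉ (Q j').support) ∧
      (∀ j : {j // j ∈ S₁}, x j ∈ W 0 ∩ W 1 ∧
        (∃ m ∈ S₁, x j ∈ (P m).support) ∧
        y j ∈ W (l - 1) ∩ W l ∧ (∃ m ∈ S₁, y j ∈ (P m).support)) ∧
      (∀ j, (Q j).toSubgraph ≤
        ((⊤ : G.Subgraph).induce (W 0) ⊔ (⊤ : G.Subgraph).induce (W l)) ⊔
          ⨆ m : {m : Fin q // m ∉ S₂}, (P m.1).toSubgraph)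


def induceHomSubset {V : Type*} (G : SimpleGraph V) {s t : Set V} (h : s ⊆ t) :
    G.induce s →g G.induce t :=
  ⟨fun v => ⟨v.1, h v.2⟩, fun hadj => hadj⟩

theorem connected_insert {V : Type*} {G : SimpleGraph V} {s : Set V} {x y : V}
    (hs : (G.induce s).Connected) (hx : x ∈ s) (hadj : G.Adj x y) :
    (G.induce (insert y s)).Connected := by
  constructor
  intro u v
  have key : ∀ u : ↥(insert y s),
      (G.induce (insert y s)).Reachable u ⟨x, Set.mem_insert_of_mem _ hx⟩ := by
    rintro ⟨u, hu⟩
    rcases hu with rfl | hu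
    · exact Adj.reachable hadj.symm
    · exact (hs.preconnected ⟨u, hu⟩ ⟨x, hx⟩).map
        (induceHomSubset G (Set.subset_insert y s))
  exact (key u).trans (key v).symm

theorem exit_edge {V : Type*} {G : SimpleGraph V} {s C : Set V}
    (hs : (G.induce s).Connected) (hCs : C ⊆ s) {c d : V}
    (hc : c ∈ C) (hd : d ∈ s) (hdC : d ∉ C) :
    ∃ x ∈ C, ∃ y ∈ s, y ∉ C ∧ G.Adj x y := by
  obtain ⟨w⟩ := hs.preconnected ⟨c, hCs hc⟩ ⟨d, hd⟩
  have key : ∀ (u v : ↥s) (w : (G.induce s).Walk u v), u.1 ∈ C → v.1 ∉ C →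
      ∃ x ∈ C, ∃ y ∈ s, y ∉ C ∧ G.Adj x y := by
    intro u v w
    induction w with
    | nil => intro h1 h2; exact absurd h1 h2
    | @cons a bb cc h p ih =>
      intro h1 h2
      by_cases hb : bb.1 ∈ C
      · exact ih hb h2
      · exact ⟨a.1, h1, bb.1, bb.2, hb, h⟩
  exact key _ _ w hc hdC

theorem cross_sep {V : Type*} {G : SimpleGraph V} {l : ℕ} {W : ℕ → Set V}
    (hdec : IsLinDecomp G l W) {i : ℕ} (hi1 : 1 ≤ i) (hil : i ≤ l) :
    ∀ {u v : V} (w : G.Walk u v), (∃ m ≤ i - 1, u ∈ W m) →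
      (¬ ∃ m ≤ i - 1, v ∈ W m) → ∃ x ∈ w.support, x ∈ W (i - 1) ∩ W i := by
  intro u v w
  induction w with
  | nil => intro h1 h2; exact absurd h1 h2
  | @cons a bb cc h p ih =>
    intro h1 h2
    by_cases hb : ∃ m ≤ i - 1, bb ∈ W m
    · obtain ⟨x, hx, hx2⟩ := ih hb h2
      exact ⟨x, List.mem_cons_of_mem _ hx, hx2⟩
    · obtain ⟨m, hm, hum⟩ := h1
      obtain ⟨k, hk, huk, hbk⟩ := hdec.2.1 _ _ h
      have hik : i ≤ k := by
        by_contra hc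
        exact hb ⟨k, by omega, hbk⟩
      refine ⟨a, by simp, ?_, ?_⟩
      · exact hdec.2.2 m (i - 1) k hm (by omega) hk ⟨hum, huk⟩
      · exact hdec.2.2 m i k (by omega) hik hk ⟨hum, huk⟩

theorem mem_support_of_length_zero {V : Type*} {G : SimpleGraph V} {u v x : V}
    {p : G.Walk u v} (h : p.length = 0) (hx : x ∈ p.support) : x = u := by
  cases p with
  | nil => simpa using hx
  | cons h' p' => simp at h

/-- assume Hypothesis H ((L1)–(L9), G 6-connected with no K₆ minor,
l ≥ 2, q ≥ 6) and that there are 6·C(q,6) distinct indices i, 1 ≤ i ≤ l−1, such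
that G[W i] contains a non-trivial 𝒫-bridge attaching only to trivial
foundational paths.  Then G has a K₆ minor. -/
theorem nontrivial_bridges_on_trivial_paths_K6 {V : Type*} [Fintype V]
    (G : SimpleGraph V) (l q : ℕ) (hl : 2 ≤ l) (hq : 6 ≤ q)
    (h6c : IsKConnected 6 G)
    (hnoK6 : ¬ HasMinor G (⊤ : SimpleGraph (Fin 6)))
    (W : ℕ → Set V) (hdec : IsLinDecomp G l W) (hadh : HasAdhesion l q W)
    (hproper : LinDecompProper l W)
    (a b : Fin q → V) (P : ∀ j, G.Walk (a j) (b j))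
    (hlink : IsFoundLinkage G l q W a b P)
    (hL6 : CondL6 G l q W a b P) (hL7 : CondL7 G l q W a b P)
    (hL8 : CondL8 G l q W a b P) (hL9 : CondL9 G l q W a b P)
    (I : Finset ℕ) (hI : I ⊆ Finset.Icc 1 (l - 1))
    (hIcard : I.card = 6 * q.choose 6)
    (hbridges : ∀ i ∈ I, ∃ B : G.Subgraph,
      IsBridgeIn G (W i) (linkSub G q a b P) B ∧
      (¬ ∃ x y : V, B.verts = {x, y} ∧ B.edgeSet = {s(x, y)}) ∧
      (∀ j : Fin q, (∃ x ∈ B.verts, x ∈ (P j).support) → (P j).length = 0)) :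
    HasMinor G (⊤ : SimpleGraph (Fin 6)) := by

  classical
  set Sv := (linkSub G q a b P).verts with hSvdef
  have hSvU : Sv = ⋃ j, {x | x ∈ (P j).support} := by
    simp [hSvdef, linkSub, Subgraph.verts_iSup, Walk.verts_toSubgraph]
  have hsupSv : ∀ j : Fin q, ∀ x ∈ (P j).support, x ∈ Sv := by
    intro j x hx; rw [hSvU]; exact Set.mem_iUnion.2 ⟨j, hx⟩
  have hainj : ∀ j j' : Fin q, a j = a j' → j = j' := by
    intro j j' h
    by_contra hne
    refine hlink.2.1 j j' hne (a j) (Walk.start_mem_support _) ?_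
    rw [h]; exact Walk.start_mem_support _
  -- every path meets every separator
  have hmeet : ∀ i, 1 ≤ i → i ≤ l → ∀ j : Fin q,
      ∃ x ∈ (P j).support, x ∈ W (i - 1) ∩ W i := by
    intro i hi1 hil j
    by_cases hb : ∃ m ≤ i - 1, b j ∈ W m
    · obtain ⟨m, hm, hbm⟩ := hb
      have hbl : b j ∈ W l := ((hlink.2.2 j).2).2
      refine ⟨b j, Walk.end_mem_support _, ?_, ?_⟩
      · exact hdec.2.2 m (i - 1) l hm (by omega) le_rfl ⟨hbm, hbl⟩
      · exact hdec.2.2 m i l (by omega) (by omega) le_rfl ⟨hbm, hbl⟩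
    · exact cross_sep hdec hi1 hil (P j) ⟨0, by omega, (hlink.2.2 j).1.1⟩ hb
  -- separators are covered by the linkage
  have hsep : ∀ i, 1 ≤ i → i ≤ l → W (i - 1) ∩ W i ⊆ Sv := by
    intro i hi1 hil
    choose f hf1 hf2 using hmeet i hi1 hil
    have hinj : Function.Injective f := by
      intro j j' h
      by_contra hne
      exact hlink.2.1 j j' hne (f j) (hf1 j) (h ▸ hf1 j')
    have hfin : f '' Set.univ = W (i - 1) ∩ W i := by
      apply Set.eq_of_subset_of_ncard_le
      · rintro x ⟨j, _, rfl⟩; exact hf2 j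
      · rw [hadh i hi1 hil, Set.ncard_image_of_injective _ hinj, Set.ncard_univ]
        simp
      · exact Set.finite_of_ncard_ne_zero (by rw [hadh i hi1 hil]; omega)
    intro x hx
    rw [← hfin] at hx
    obtain ⟨j, _, rfl⟩ := hx
    exact hsupSv j _ (hf1 j)
  have hIb : ∀ i ∈ I, 1 ≤ i ∧ i ≤ l - 1 := fun i hi => Finset.mem_Icc.1 (hI hi)
  -- per-index package
  have hpack : ∀ i : ℕ, ∃ (C : Set V) (T : Finset (Fin q)), i ∈ I →
      C ⊆ W i ∧ (∀ x ∈ C, x ∉ Sv) ∧ C.Nonempty ∧ (G.induce C).Connected ∧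
      T.card = 6 ∧ (∀ j ∈ T, ∃ x ∈ C, G.Adj x (a j)) := by
    intro i
    by_cases hiI : i ∈ I
    swap
    · exact ⟨∅, ∅, fun h => absurd h hiI⟩
    obtain ⟨hi1, hil⟩ := hIb i hiI
    obtain ⟨B, ⟨hBsub, hBdisj, hcase⟩, hnt, hattach⟩ := hbridges i hiI
    rcases hcase with ⟨x, y, _, _, _, hv, he⟩ | ⟨C, hC, hBv, hBe⟩
    · exact absurd ⟨x, y, hv, he⟩ hnt
    set A := {v ∈ Sv | ∃ x ∈ C, G.Adj x v} with hAdef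
    have hASv : A ⊆ Sv := fun v hv => hv.1
    have hCWS : C ⊆ W i \ Sv := hC.1
    -- all neighbours of C lie in C or A
    have hnbr : ∀ x ∈ C, ∀ y, G.Adj x y → y ∈ C ∨ y ∈ A := by
      intro x hx y hxy
      obtain ⟨k, hkl, hxk, hyk⟩ := hdec.2.1 x y hxy
      have hxWi : x ∈ W i := (hCWS hx).1
      by_cases hyWi : y ∈ W i
      · by_cases hySv : y ∈ Sv
        · exact Or.inr ⟨hySv, x, hx, hxy⟩
        · left
          refine hC.2.2.2 (insert y C) (Set.subset_insert _ _) ?_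
            (connected_insert hC.2.2.1 hx hxy) (Set.mem_insert _ _)
          rintro z (rfl | hz)
          · exact ⟨hyWi, hySv⟩
          · exact hCWS hz
      · exfalso
        rcases lt_or_ge k i with hki | hki
        · have h1 : x ∈ W (i - 1) :=
            hdec.2.2 k (i - 1) i (by omega) (by omega) (by omega) ⟨hxk, hxWi⟩
          exact (hCWS hx).2 (hsep i hi1 (by omega) ⟨h1, hxWi⟩)
        · have hik : i < k := by
            rcases eq_or_lt_of_le hki with rfl | h
            · exact absurd hyk hyWi
            · exact h
          have h1 : x ∈ W (i + 1) :=
            hdec.2.2 i (i + 1) k (by omega) (by omega) hkl ⟨hxWi, hxk⟩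
          have h2 : x ∈ W (i + 1 - 1) ∩ W (i + 1) := by
            simpa using Set.mem_inter hxWi h1
          exact (hCWS hx).2 (hsep (i + 1) (by omega) (by omega) h2)
    set J := Finset.univ.filter (fun j : Fin q => ∃ x ∈ C, G.Adj x (a j)) with hJdef
    have hJ6 : 6 ≤ J.card := by
      by_contra hlt
      push_neg at hlt
      have hAsub : A ⊆ (fun j => a j) '' (J : Set (Fin q)) := by
        intro v hv'
        obtain ⟨hvS, hvadj⟩ := hv'
        have hvS' := hvS
        rw [hSvU] at hvS'
        obtain ⟨j, hj⟩ := Set.mem_iUnion.1 hvS'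
        have hvB : v ∈ B.verts := by
          rw [hBv]; right; exact ⟨hvS, hvadj⟩
        have hlen := hattach j ⟨v, hvB, hj⟩
        have hva : v = a j := mem_support_of_length_zero hlen hj
        refine ⟨j, ?_, hva.symm⟩
        simp only [hJdef, Finset.coe_filter, Finset.mem_univ, true_and,
          Set.mem_setOf_eq]
        exact hva ▸ hvadj
      have hA5 : A.ncard < 6 := by
        have h1 : A.ncard ≤ ((fun j => a j) '' (J : Set (Fin q))).ncard :=
          Set.ncard_le_ncard hAsub ((J : Set (Fin q)).toFinite.image _)
        have h2 : ((fun j => a j) '' (J : Set (Fin q))).ncard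
            ≤ (J : Set (Fin q)).ncard :=
          Set.ncard_image_le (J : Set (Fin q)).toFinite
        rw [Set.ncard_coe_finset] at h2
        omega
      have hconn := h6c.2 A hA5
      obtain ⟨c, hc⟩ := hC.2.1
      have hCAc : C ⊆ Aᶜ := fun z hz h => (hCWS hz).2 (hASv h)
      obtain ⟨w0, hw0, hw01⟩ := Set.not_subset.1 ((hproper 1 le_rfl (by omega)).1)
      have hw0Wi : w0 ∉ W i := fun h =>
        hw01 (hdec.2.2 0 1 i (by omega) (by omega) (by omega) ⟨hw0, h⟩)
      have hw0A : w0 ∈ Aᶜ := fun h =>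
        hw0Wi (hBsub (hBv ▸ Or.inr h))
      have hw0C : w0 ∉ C := fun h => hw0Wi (hCWS h).1
      obtain ⟨x, hxC, y, hy, hyC, hxy⟩ := exit_edge hconn hCAc hc hw0A hw0C
      rcases hnbr x hxC y hxy with h | h
      · exact hyC h
      · exact hy h
    obtain ⟨T, hTJ, hT6⟩ := Finset.exists_subset_card_eq hJ6
    refine ⟨C, T, fun _ => ⟨fun z hz => (hCWS hz).1, fun z hz => (hCWS hz).2,
      hC.2.1, hC.2.2.1, hT6, fun j hj => ?_⟩⟩
    have := hTJ hj
    rw [hJdef, Finset.mem_filter] at this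
    exact this.2
  choose C T hpk using hpack
  -- disjointness of the components across indices
  have hCdisj : ∀ i i', i ∈ I → i' ∈ I → i ≠ i' → ∀ z, z ∈ C i → z ∉ C i' := by
    have key : ∀ i i', i ∈ I → i' ∈ I → i < i' → ∀ z, z ∈ C i → z ∉ C i' := by
      intro i i' hi hi' hlt z hz hz'
      obtain ⟨hi1, hil⟩ := hIb i hi
      obtain ⟨hi'1, hi'l⟩ := hIb i' hi'
      have h1 : z ∈ W (i + 1) :=
        hdec.2.2 i (i + 1) i' (by omega) (by omega) (by omega)
          ⟨(hpk i hi).1 hz, (hpk i' hi').1 hz'⟩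
      have h2 : z ∈ W (i + 1 - 1) ∩ W (i + 1) := by
        simpa using Set.mem_inter ((hpk i hi).1 hz) h1
      exact (hpk i hi).2.1 z hz (hsep (i + 1) (by omega) (by omega) h2)
    intro i i' hi hi' hne z hz hz'
    rcases lt_or_gt_of_ne hne with h | h
    · exact key i i' hi hi' h z hz hz'
    · exact key i' i hi' hi h z hz' hz
  -- pigeonhole
  have hmaps : ∀ i ∈ I, T i ∈ Finset.univ.powersetCard 6 := by
    intro i hi
    rw [Finset.mem_powersetCard]
    exact ⟨Finset.subset_univ _, (hpk i hi).2.2.2.2.1⟩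
  have hcards : (Finset.univ.powersetCard 6 : Finset (Finset (Fin q))).card * 5
      < I.card := by
    rw [hIcard, Finset.card_powersetCard, Finset.card_univ, Fintype.card_fin]
    have := Nat.choose_pos (show 6 ≤ q from hq)
    omega
  obtain ⟨T0, hT0, hfib⟩ :=
    Finset.exists_lt_card_fiber_of_mul_lt_card_of_maps_to hmaps hcards
  have hJ6 : 6 ≤ (I.filter (fun i => T i = T0)).card := hfib
  obtain ⟨J6, hJ6sub, hJ6card⟩ := Finset.exists_subset_card_eq hJ6
  have hT0card : T0.card = 6 := (Finset.mem_powersetCard.1 hT0).2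
  set idx : Fin 6 → ℕ := fun m => J6.orderEmbOfFin hJ6card m with hidxdef
  set t : Fin 6 → Fin q := fun m => T0.orderEmbOfFin hT0card m with htdef
  have hidxmem : ∀ m, idx m ∈ I.filter (fun i => T i = T0) := fun m =>
    hJ6sub (J6.orderEmbOfFin_mem hJ6card m)
  have hidxI : ∀ m, idx m ∈ I := fun m => (Finset.mem_filter.1 (hidxmem m)).1
  have hidxT : ∀ m, T (idx m) = T0 := fun m => (Finset.mem_filter.1 (hidxmem m)).2
  have hidxinj : Function.Injective idx := (J6.orderEmbOfFin hJ6card).injective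
  have htinj : Function.Injective t := (T0.orderEmbOfFin hT0card).injective
  have htmem : ∀ m, t m ∈ T0 := fun m => T0.orderEmbOfFin_mem hT0card m
  have hadj' : ∀ m m' : Fin 6, ∃ x ∈ C (idx m), G.Adj x (a (t m')) := by
    intro m m'
    exact (hpk (idx m) (hidxI m)).2.2.2.2.2 (t m') ((hidxT m).symm ▸ htmem m')
  have haSv : ∀ j : Fin q, a j ∈ Sv := fun j =>
    hsupSv j (a j) (Walk.start_mem_support _)
  have haC : ∀ (j : Fin q) (m : Fin 6), a j ∉ C (idx m) := fun j m h =>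
    (hpk (idx m) (hidxI m)).2.1 _ h (haSv j)
  refine ⟨fun m => C (idx m) ∪ {a (t m)}, ?_, ?_, ?_, ?_⟩
  · intro m
    exact Set.Nonempty.inl (hpk (idx m) (hidxI m)).2.2.1
  · intro m
    obtain ⟨x, hx, hxadj⟩ := hadj' m m
    show (G.induce (C (idx m) ∪ {a (t m)})).Connected
    rw [Set.union_singleton]
    exact connected_insert (hpk (idx m) (hidxI m)).2.2.2.1 hx hxadj
  · intro m m' hne
    rw [Set.disjoint_left]
    rintro z (hz | hz) (hz' | hz')
    · exact hCdisj (idx m) (idx m') (hidxI m) (hidxI m')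
        (fun h => hne (hidxinj h)) z hz hz'
    · rw [hz'] at hz
      exact haC (t m') m hz
    · rw [hz] at hz'
      exact haC (t m) m' hz'
    · rw [hz] at hz'
      exact hne (htinj (hainj _ _ hz'))
  · intro m m' hmm
    have hne : m ≠ m' := by
      intro h; exact (h ▸ hmm).ne rfl
    obtain ⟨x, hx, hxadj⟩ := hadj' m m'
    exact ⟨x, Or.inl hx, a (t m'), Or.inr rfl, hxadj⟩
end
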